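/- arXiv:2405.08124 — 8 statements merged into one kernel-verified Lean document; each statement's English description precedes it below -/
import Mathlib

section
/- Let k be a field, n a natural number, and f a polynomial over k of degree at most n. Then for every tuple z : Fin (n+2) → k one has ∑_{i ∈ Fin(n+2)} (-1)^i · (∏_{j < l, j ≠ i, l ≠ i} (z l − z j)) · f(z i) = 0, where the product is over all pairs j < l in Fin (n+2) with both j and l different from i. -/
open Finset

/-- **Lagrange interpolation identity.** For a polynomial `f` of degree at most `n`
over a field `k` and any tuple `z : Fin (n+2) → k`, the alternating sum of the values
`f (z i)`, weighted by the Vandermonde products of the remaining coordinates, vanishes. -/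
theorem lagrange_alternating_sum_eq_zero (k : Type*) [Field k] (n : ℕ)
    (f : Polynomial k) (hf : f.degree ≤ n) (z : Fin (n + 2) → k) :
    ∑ i : Fin (n + 2), (-1 : k) ^ (i : ℕ) *
      (∏ p ∈ Finset.univ.filter
          (fun p : Fin (n + 2) × Fin (n + 2) => p.1 < p.2 ∧ p.1 ≠ i ∧ p.2 ≠ i),
        (z p.2 - z p.1)) * f.eval (z i) = 0 := by
  classical
  set M : Matrix (Fin (n + 2)) (Fin (n + 2)) k :=
    Matrix.of fun i j => if j = Fin.last (n + 1) then f.eval (z i) else z i ^ (j : ℕ) with hM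
  have hnd : f.natDegree < n + 2 :=
    lt_of_le_of_lt (Polynomial.natDegree_le_iff_degree_le.mpr hf) (by omega)
  -- M = vandermonde z * C where C has zero last row
  set C : Matrix (Fin (n + 2)) (Fin (n + 2)) k :=
    Matrix.of fun j l => if l = Fin.last (n + 1) then f.coeff j else if j = l then 1 else 0
    with hC
  have hfactor : M = Matrix.vandermonde z * C := by
    ext i l
    rw [Matrix.mul_apply]
    by_cases hl : l = Fin.last (n + 1)
    · subst hl
      simp only [hM, hC, Matrix.of_apply, if_pos rfl, Matrix.vandermonde_apply]
      rw [Polynomial.eval_eq_sum_range' hnd, ← Fin.sum_univ_eq_sum_range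
        (fun j => f.coeff j * z i ^ j)]
      exact Finset.sum_congr rfl fun j _ => (mul_comm _ _)
    · simp only [hM, hC, Matrix.of_apply, if_neg hl, Matrix.vandermonde_apply]
      rw [Finset.sum_eq_single l]
      · simp
      · intro b _ hb
        simp [if_neg hl, hb]
      · simp
  have hdetC : C.det = 0 := by
    apply Matrix.det_eq_zero_of_row_eq_zero (Fin.last (n + 1))
    intro l
    by_cases hl : l = Fin.last (n + 1)
    · subst hl
      simp only [hC, Matrix.of_apply, if_pos rfl, Fin.val_last]
      exact Polynomial.coeff_eq_zero_of_degree_lt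
        (lt_of_le_of_lt hf (by exact_mod_cast Nat.lt_succ_self n))
    · simp [hC, if_neg hl, Ne.symm hl]
  have hdetM : M.det = 0 := by rw [hfactor, Matrix.det_mul, hdetC, mul_zero]
  rw [Matrix.det_succ_column M (Fin.last (n + 1))] at hdetM
  -- identify the minors
  have hminor : ∀ i : Fin (n + 2),
      (M.submatrix i.succAbove (Fin.last (n + 1)).succAbove).det =
        ∏ p ∈ Finset.univ.filter
          (fun p : Fin (n + 2) × Fin (n + 2) => p.1 < p.2 ∧ p.1 ≠ i ∧ p.2 ≠ i),
          (z p.2 - z p.1) := by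
    intro i
    have hsub : M.submatrix i.succAbove (Fin.last (n + 1)).succAbove =
        Matrix.vandermonde (z ∘ i.succAbove) := by
      ext a b
      simp only [hM, Matrix.submatrix_apply, Fin.succAbove_last, Matrix.of_apply,
        Matrix.vandermonde_apply, Function.comp_apply]
      rw [if_neg (Fin.castSucc_lt_last b).ne, Fin.coe_castSucc]
    rw [hsub, Matrix.det_vandermonde]
    simp only [Function.comp_apply]
    rw [Finset.prod_sigma' (Finset.univ : Finset (Fin (n + 1))) (fun a => Finset.Ioi a)
      (fun a b => z (i.succAbove b) - z (i.succAbove a))]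
    refine Finset.prod_nbij (fun p => (i.succAbove p.1, i.succAbove p.2)) ?_ ?_ ?_ ?_
    · rintro ⟨a, b⟩ hab
      rw [Finset.mem_sigma] at hab
      simp only [Finset.mem_filter, Finset.mem_univ, true_and]
      exact ⟨(Fin.strictMono_succAbove i) (Finset.mem_Ioi.mp hab.2),
        Fin.succAbove_ne i a, Fin.succAbove_ne i b⟩
    · rintro ⟨a, b⟩ - ⟨a', b'⟩ - h
      simp only [Prod.mk.injEq] at h
      have h1 := Fin.succAbove_right_injective (p := i) h.1
      have h2 := Fin.succAbove_right_injective (p := i) h.2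
      subst h1; subst h2; rfl
    · rintro ⟨j, l⟩ hp
      simp only [Finset.coe_filter, Set.mem_setOf_eq, Finset.mem_univ, true_and] at hp
      obtain ⟨hjl, hj, hl⟩ := hp
      obtain ⟨a, ha⟩ := Fin.exists_succAbove_eq hj
      obtain ⟨b, hb⟩ := Fin.exists_succAbove_eq hl
      refine ⟨⟨a, b⟩, ?_, by simp [ha, hb]⟩
      simp only [Finset.mem_coe, Finset.mem_sigma, Finset.mem_univ, true_and,
        Finset.mem_Ioi]
      rw [← (Fin.strictMono_succAbove i).lt_iff_lt, ha, hb]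
      exact hjl
    · rintro ⟨a, b⟩ -
      rfl
  have hMlast : ∀ i : Fin (n + 2), M i (Fin.last (n + 1)) = f.eval (z i) := fun i => by
    simp [hM]
  have hsq : ((-1 : k) ^ (n + 1)) * ((-1 : k) ^ (n + 1)) = 1 := by
    rw [← pow_add, ← two_mul, pow_mul]; norm_num
  calc ∑ i : Fin (n + 2), (-1 : k) ^ (i : ℕ) *
        (∏ p ∈ Finset.univ.filter
          (fun p : Fin (n + 2) × Fin (n + 2) => p.1 < p.2 ∧ p.1 ≠ i ∧ p.2 ≠ i),
          (z p.2 - z p.1)) * f.eval (z i)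
      = (-1 : k) ^ (n + 1) * ∑ i : Fin (n + 2), (-1 : k) ^ ((i : ℕ) + (Fin.last (n + 1) : ℕ)) *
          M i (Fin.last (n + 1)) * (M.submatrix i.succAbove (Fin.last (n + 1)).succAbove).det := by
        rw [Finset.mul_sum]
        refine Finset.sum_congr rfl fun i _ => ?_
        rw [hminor i, hMlast i, Fin.val_last, pow_add]
        have h2 : ((-1 : k)) ^ (n * 2) = 1 := by rw [mul_comm, pow_mul]; norm_num
        ring_nf
        rw [h2, mul_one]
    _ = 0 := by rw [hdetM, mul_zero]
end

section
/- Let k be a field, Ω a countably infinite subset of k, f : k → k, and n a natural number. Then the following are equivalent: (a) for every tuple z : Fin (n+2) → k all of whose coordinates lie in Ω, ∑_{i ∈ Fin(n+2)} (-1)^i · (∏_{j < l, j ≠ i, l ≠ i} (z l − z j)) · f(z i) = 0; (b) there exists a polynomial p over k of degree at most n such that f(x) = p(x) for all x ∈ Ω. -/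
open Finset Polynomial Matrix

namespace NablaAux

variable {k : Type*} [Field k]

lemma prod_filter_lt {m : ℕ} (g : Fin m → Fin m → k) :
    (∏ p ∈ Finset.univ.filter (fun p : Fin m × Fin m => p.1 < p.2), g p.1 p.2) =
    ∏ r : Fin m, ∏ c ∈ Ioi r, g r c := by
  rw [Finset.prod_filter, Fintype.prod_prod_type]
  refine Finset.prod_congr rfl fun r _ => ?_
  rw [← Finset.prod_filter, Finset.filter_lt_eq_Ioi]

/-- Reindexing the deleted Vandermonde product. -/
lemma vand_del {n : ℕ} (z : Fin (n + 2) → k) (i : Fin (n + 2)) :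
    (∏ p ∈ Finset.univ.filter
        (fun p : Fin (n + 2) × Fin (n + 2) => p.1 < p.2 ∧ p.1 ≠ i ∧ p.2 ≠ i),
      (z p.2 - z p.1)) =
    ∏ r : Fin (n + 1), ∏ c ∈ Ioi r, (z (i.succAbove c) - z (i.succAbove r)) := by
  rw [← prod_filter_lt (fun r c => z (i.succAbove c) - z (i.succAbove r))]
  refine (Finset.prod_bij (fun p _ => (i.succAbove p.1, i.succAbove p.2)) ?_ ?_ ?_ ?_).symm
  · rintro ⟨r, c⟩ hp
    simp only [Finset.mem_filter, Finset.mem_univ, true_and] at hp ⊢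
    exact ⟨(Fin.succAbove_lt_succAbove_iff).2 hp, Fin.succAbove_ne i r, Fin.succAbove_ne i c⟩
  · rintro ⟨r, c⟩ _ ⟨r', c'⟩ _ h
    simp only [Prod.mk.injEq] at h
    exact Prod.ext (Fin.succAbove_right_injective h.1) (Fin.succAbove_right_injective h.2)
  · rintro ⟨a, b⟩ hab
    simp only [Finset.mem_filter, Finset.mem_univ, true_and] at hab
    obtain ⟨hlt, ha, hb⟩ := hab
    obtain ⟨r, hr⟩ := Fin.exists_succAbove_eq ha
    obtain ⟨c, hc⟩ := Fin.exists_succAbove_eq hb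
    refine ⟨(r, c), ?_, by simp [hr, hc]⟩
    simp only [Finset.mem_filter, Finset.mem_univ, true_and]
    rw [← Fin.succAbove_lt_succAbove_iff (p := i), hr, hc]
    exact hlt
  · rintro ⟨r, c⟩ _
    rfl

/-- The key determinant identity: the alternating sum vanishes for polynomials of
degree at most `n`. -/
lemma key {n : ℕ} (z : Fin (n + 2) → k) (q : Polynomial k) (hq : q.degree ≤ n) :
    ∑ i : Fin (n + 2), (-1 : k) ^ (i : ℕ) *
        (∏ p ∈ Finset.univ.filter
            (fun p : Fin (n + 2) × Fin (n + 2) => p.1 < p.2 ∧ p.1 ≠ i ∧ p.2 ≠ i),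
          (z p.2 - z p.1)) * q.eval (z i) = 0 := by
  have hnd : q.natDegree < n + 1 :=
    Nat.lt_succ_of_le (Polynomial.natDegree_le_iff_degree_le.2 hq)
  set M : Matrix (Fin (n + 2)) (Fin (n + 2)) k :=
    Matrix.of (fun r c => if (c : ℕ) < n + 1 then z r ^ (c : ℕ) else q.eval (z r)) with hM
  -- the determinant vanishes: last column is a combination of the others
  have hdet : M.det = 0 := by
    have h := Matrix.det_updateCol_sum M (Fin.last (n + 1))
      (fun m => if (m : ℕ) < n + 1 then q.coeff m else 0)
    have hcol : M.updateCol (Fin.last (n + 1))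
        (fun r => ∑ m : Fin (n + 2),
          (if (m : ℕ) < n + 1 then q.coeff m else 0) • M r m) = M := by
      ext r c
      rcases eq_or_ne c (Fin.last (n + 1)) with rfl | hc
      · rw [Matrix.updateCol_self]
        have : ∀ m : Fin (n + 2),
            (if (m : ℕ) < n + 1 then q.coeff m else 0) • M r m =
            if (m : ℕ) < n + 1 then q.coeff m * z r ^ (m : ℕ) else 0 := by
          intro m
          by_cases hm : (m : ℕ) < n + 1 <;> simp [hM, hm] <;> exact fun h => absurd h (by omega)
        rw [Finset.sum_congr rfl (fun m _ => this m), Fin.sum_univ_eq_sum_range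
          (fun j => if j < n + 1 then q.coeff j * z r ^ j else 0)]
        rw [Finset.sum_range_succ,
          Finset.sum_congr rfl (fun j hj => if_pos (Finset.mem_range.1 hj))]
        simp [hM, Polynomial.eval_eq_sum_range' hnd (z r)]
      · rw [Matrix.updateCol_ne hc]
    rw [hcol] at h
    simpa using h
  rw [Matrix.det_succ_column M (Fin.last (n + 1))] at hdet
  have hsub : ∀ i : Fin (n + 2),
      (M.submatrix i.succAbove (Fin.last (n + 1)).succAbove).det =
      ∏ p ∈ Finset.univ.filter
          (fun p : Fin (n + 2) × Fin (n + 2) => p.1 < p.2 ∧ p.1 ≠ i ∧ p.2 ≠ i),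
        (z p.2 - z p.1) := by
    intro i
    have : M.submatrix i.succAbove (Fin.last (n + 1)).succAbove =
        Matrix.vandermonde (fun r => z (i.succAbove r)) := by
      ext r c
      simp only [Matrix.submatrix_apply, Fin.succAbove_last, Matrix.vandermonde_apply, hM,
        Matrix.of_apply, Fin.coe_castSucc]
      rw [if_pos c.isLt]
    rw [this, Matrix.det_vandermonde, vand_del]
  have hlast : ∀ i : Fin (n + 2), M i (Fin.last (n + 1)) = q.eval (z i) := by
    intro i
    simp [hM]
  rw [Finset.sum_congr rfl (fun i _ => by rw [hsub i, hlast i])] at hdet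
  have := congrArg (fun t => (-1 : k) ^ (n + 1) * t) hdet
  simp only [mul_zero, Finset.mul_sum] at this
  rw [← this]
  refine Finset.sum_congr rfl fun i _ => ?_
  have : ((Fin.last (n + 1) : Fin (n + 2)) : ℕ) = n + 1 := rfl
  rw [this]
  have h1 : ((-1 : k) ^ (n + 1)) * ((-1 : k) ^ ((i : ℕ) + (n + 1))) = (-1 : k) ^ (i : ℕ) := by
    rw [← pow_add]
    have h2 : (n + 1) + ((i : ℕ) + (n + 1)) = (i : ℕ) + 2 * (n + 1) := by ring
    rw [h2, pow_add, pow_mul]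
    simp
  rw [← h1]
  ring

end NablaAux

open NablaAux in
/-- A function `f : k → k` is annihilated by all `(n+1)`-st divided-difference operators
`∇^z` with nodes in a countably infinite set `Ω ⊆ k` if and only if `f` agrees with a
polynomial of degree at most `n` on `Ω`. -/
theorem nabla_vanishes_iff_polynomial_on (k : Type*) [Field k]
    (Ω : Set k) (hΩc : Ω.Countable) (hΩi : Ω.Infinite) (f : k → k) (n : ℕ) :
    (∀ z : Fin (n + 2) → k, (∀ i, z i ∈ Ω) →
      ∑ i : Fin (n + 2), (-1 : k) ^ (i : ℕ) *
        (∏ p ∈ Finset.univ.filter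
            (fun p : Fin (n + 2) × Fin (n + 2) => p.1 < p.2 ∧ p.1 ≠ i ∧ p.2 ≠ i),
          (z p.2 - z p.1)) * f (z i) = 0) ↔
    ∃ p : Polynomial k, p.degree ≤ n ∧ ∀ x ∈ Ω, f x = p.eval x := by
  constructor
  · intro H
    set e := hΩi.natEmbedding with he
    set v : Fin (n + 1) → k := fun j => (e (j : ℕ) : k) with hv
    have hvΩ : ∀ j, v j ∈ Ω := fun j => (e (j : ℕ)).2
    have hvinj : Function.Injective v := fun a b h =>
      Fin.val_injective (e.injective (Subtype.coe_injective h))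
    set p := Lagrange.interpolate Finset.univ v (fun i => f (v i)) with hpdef
    have hinjOn : Set.InjOn v ↑(Finset.univ : Finset (Fin (n + 1))) := hvinj.injOn
    have hdeg' := Lagrange.degree_interpolate_lt (fun i => f (v i)) hinjOn
    rw [Finset.card_univ, Fintype.card_fin] at hdeg'
    have hdeg : p.degree ≤ n := by
      rcases eq_or_ne p 0 with h0 | h0
      · simp [h0]
      · rw [Polynomial.degree_eq_natDegree h0] at hdeg' ⊢
        exact_mod_cast Nat.lt_succ_iff.1 (by exact_mod_cast hdeg')
    refine ⟨p, hdeg, ?_⟩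
    intro x hx
    set z : Fin (n + 2) → k := Fin.snoc v x with hz
    have hzΩ : ∀ i, z i ∈ Ω := by
      intro i
      induction i using Fin.lastCases with
      | last => rw [hz]; simp only [Fin.snoc_last]; exact hx
      | cast j => rw [hz]; simp only [Fin.snoc_castSucc]; exact hvΩ j
    have h1 := H z hzΩ
    have h2 := key z p hdeg
    have h3 : ∑ i : Fin (n + 2), (-1 : k) ^ (i : ℕ) *
        (∏ q ∈ Finset.univ.filter
            (fun q : Fin (n + 2) × Fin (n + 2) => q.1 < q.2 ∧ q.1 ≠ i ∧ q.2 ≠ i),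
          (z q.2 - z q.1)) * (f (z i) - p.eval (z i)) = 0 := by
      simp only [mul_sub]
      rw [Finset.sum_sub_distrib, h1, h2, sub_zero]
    have hnode : ∀ j : Fin (n + 1), f (z j.castSucc) = p.eval (z j.castSucc) := by
      intro j
      have hzj : z j.castSucc = v j := by simp [hz]
      rw [hzj, hpdef, Lagrange.eval_interpolate_at_node _ hinjOn (Finset.mem_univ j)]
    rw [Finset.sum_eq_single (Fin.last (n + 1))] at h3
    · have hVlast : (∏ q ∈ Finset.univ.filter
          (fun q : Fin (n + 2) × Fin (n + 2) =>
            q.1 < q.2 ∧ q.1 ≠ Fin.last (n + 1) ∧ q.2 ≠ Fin.last (n + 1)),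
          (z q.2 - z q.1)) ≠ 0 := by
        rw [vand_del z (Fin.last (n + 1))]
        refine Finset.prod_ne_zero_iff.2 fun r _ => Finset.prod_ne_zero_iff.2 fun c hc => ?_
        have hrc : r ≠ c := (Finset.mem_Ioi.1 hc).ne'.symm
        simp only [Fin.succAbove_last]
        rw [hz]
        simp only [Fin.snoc_castSucc]
        exact sub_ne_zero_of_ne fun hcr => hrc (hvinj hcr).symm
      have hpow : ((-1 : k) ^ ((Fin.last (n + 1) : Fin (n + 2)) : ℕ)) ≠ 0 := by
        simp
      have := mul_eq_zero.1 h3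
      rcases this with h | h
      · rcases mul_eq_zero.1 h with h' | h'
        · exact absurd h' hpow
        · exact absurd h' hVlast
      · have hxlast : z (Fin.last (n + 1)) = x := by simp [hz]
        rw [hxlast] at h
        exact sub_eq_zero.1 h
    · intro b _ hb
      obtain ⟨j, rfl⟩ := Fin.exists_castSucc_eq.2 hb
      rw [hnode j, sub_self, mul_zero]
    · intro h
      exact absurd (Finset.mem_univ _) h
  · rintro ⟨p, hdeg, hp⟩ z hz
    rw [Finset.sum_congr rfl (fun i _ => by rw [hp (z i) (hz i)])]
    exact key z p hdeg
end

section
/- Let r be a natural number and S a type whose cardinality is at least the cardinal successor of the beth number ℶ_r. Let f : (Fin (r+1) → S) → ℕ be symmetric, i.e. f(g ∘ σ) = f(g) for every g : Fin (r+1) → S and every permutation σ of Fin (r+1). Then there exist n : ℕ and pairwise disjoint subsets S_1, …, S_{r+1} of S, each countable and infinite, such that f(g) = n for every g : Fin (r+1) → S with g(i) ∈ S_i for all i. -/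
open Cardinal Set

universe u

namespace ErdosRadoAux

variable {α : Type u}

/-- The "type" of `x` over a set `B`: the induced coloring of `(r+1)`-subsets of `B`
obtained by adding `x`. -/
noncomputable def tpf (r : ℕ) (c : Finset α → ℕ) (B : Set α) (x : α) : Finset α → ℕ :=
  fun t =>
    haveI := Classical.decEq α
    haveI := Classical.propDecidable (↑t ⊆ B ∧ t.card = r + 1)
    if ↑t ⊆ B ∧ t.card = r + 1 then c (insert x t) else 0

/-- A canonical representative realizing a given type over `B`, outside `B`. -/
noncomputable def rep [Nonempty α] (r : ℕ) (c : Finset α → ℕ) (B : Set α)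
    (φ : Finset α → ℕ) : α :=
  haveI := Classical.propDecidable
  if h : ∃ x, x ∉ B ∧ tpf r c B x = φ then h.choose else Classical.arbitrary α

lemma rep_spec [Nonempty α] {r : ℕ} {c : Finset α → ℕ} {B : Set α} {φ : Finset α → ℕ}
    (h : ∃ x, x ∉ B ∧ tpf r c B x = φ) :
    rep r c B φ ∉ B ∧ tpf r c B (rep r c B φ) = φ := by
  rw [rep]
  rw [dif_pos h]
  exact h.choose_spec

/-- The set of representatives of all types over `B` realized outside `B`. -/
noncomputable def Wset [Nonempty α] (r : ℕ) (c : Finset α → ℕ) (B : Set α) : Set α :=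
  rep r c B '' (tpf r c B '' Bᶜ)

lemma rep_mem_Wset [Nonempty α] {r : ℕ} {c : Finset α → ℕ} {B : Set α} {x : α}
    (hx : x ∉ B) : rep r c B (tpf r c B x) ∈ Wset r c B :=
  ⟨tpf r c B x, ⟨x, hx, rfl⟩, rfl⟩

lemma mk_finsetSub_le {b : Cardinal.{u}} (hb : ℵ₀ ≤ b) {B : Set α} (hB : #B ≤ b)
    (r : ℕ) : #{t : Finset α // ↑t ⊆ B ∧ t.card = r + 1} ≤ b := by
  classical
  have h1 : #{t : Finset α // ↑t ⊆ B ∧ t.card = r + 1} ≤ #(Finset B) := by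
    refine mk_le_of_injective (f := fun t => (t.1).subtype (· ∈ B)) ?_
    intro t s hts
    have ht : (t.1.subtype (· ∈ B)).map (Function.Embedding.subtype _) = t.1 := by
      rw [Finset.subtype_map, Finset.filter_true_of_mem (fun x hx => t.2.1 hx)]
    have hs : (s.1.subtype (· ∈ B)).map (Function.Embedding.subtype _) = s.1 := by
      rw [Finset.subtype_map, Finset.filter_true_of_mem (fun x hx => s.2.1 hx)]
    exact Subtype.ext (by rw [← ht, ← hs]; exact congrArg _ hts)
  refine h1.trans ?_
  rcases finite_or_infinite B with hfin | hinf
  · haveI := Fintype.ofFinite ↥B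
    exact (le_of_lt (lt_aleph0_of_finite (Finset ↥B))).trans hb
  · rw [mk_finset_of_infinite]
    exact hB

lemma mk_Wset_le [Nonempty α] {b : Cardinal.{u}} (hb : ℵ₀ ≤ b) {B : Set α} (hB : #B ≤ b)
    (r : ℕ) (c : Finset α → ℕ) : #(Wset r c B) ≤ 2 ^ b := by
  classical
  have h1 : #(Wset r c B) ≤ #(tpf r c B '' Bᶜ) := mk_image_le
  have h2 : #(tpf r c B '' Bᶜ) ≤
      #({t : Finset α // ↑t ⊆ B ∧ t.card = r + 1} → ULift.{u} ℕ) := by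
    have hinj : Function.Injective (fun φ : (tpf r c B '' Bᶜ) =>
        (fun t : {t : Finset α // ↑t ⊆ B ∧ t.card = r + 1} => ULift.up.{u} (φ.1 t.1))) := by
      intro φ₁ φ₂ h
      obtain ⟨x₁, -, hx₁⟩ := φ₁.2
      obtain ⟨x₂, -, hx₂⟩ := φ₂.2
      refine Subtype.ext (funext fun t => ?_)
      by_cases hc : ↑t ⊆ B ∧ t.card = r + 1
      · exact congrArg ULift.down (congrFun h ⟨t, hc⟩)
      · have e₁ : φ₁.1 t = 0 := by rw [← hx₁]; simp only [tpf, if_neg hc]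
        have e₂ : φ₂.1 t = 0 := by rw [← hx₂]; simp only [tpf, if_neg hc]
        rw [e₁, e₂]
    exact mk_le_of_injective hinj
  have h3 : #({t : Finset α // ↑t ⊆ B ∧ t.card = r + 1} → ULift.{u} ℕ)
      = ℵ₀ ^ #{t : Finset α // ↑t ⊆ B ∧ t.card = r + 1} := by
    rw [← power_def, mk_uLift, mk_nat, lift_aleph0]
  have h4 : (ℵ₀ : Cardinal.{u}) ^ #{t : Finset α // ↑t ⊆ B ∧ t.card = r + 1} ≤ ℵ₀ ^ b :=
    power_le_power_left aleph0_ne_zero (mk_finsetSub_le hb hB r)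
  have h5 : (ℵ₀ : Cardinal.{u}) ^ b ≤ (2 ^ b) ^ b :=
    power_le_power_right ((le_of_lt (cantor _)).trans (power_le_power_left two_ne_zero hb))
  have h6 : ((2 : Cardinal.{u}) ^ b) ^ b = 2 ^ b := by
    rw [← power_mul, mul_eq_self hb]
  calc #(Wset r c B) ≤ ℵ₀ ^ b := h1.trans (h2.trans_eq h3) |>.trans h4
    _ ≤ 2 ^ b := h5.trans_eq h6

end ErdosRadoAux

namespace ErdosRadoAux

variable {α : Type u}

/-- Index type for the closure chain and the homogeneous sequence:
the order type of `(ℶ_r)⁺`. -/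
abbrev ii (r : ℕ) : Type u := (Order.succ (Cardinal.beth.{u} r)).ord.ToType

/-- Index type for enumerating small subsets: the order type of `ℶ_r`. -/
abbrev mu (r : ℕ) : Type u := (Cardinal.beth.{u} r).ord.ToType

/-- One step of the closure construction: add representatives for all types over
subsets of `X` of size at most `ℶ_r`. -/
noncomputable def step [Nonempty α] (r : ℕ) (c : Finset α → ℕ) (X : Set α) : Set α :=
  X ∪ Wset r c ∅ ∪ ⋃ e : {e : mu.{u} r → α // Set.range e ⊆ X}, Wset r c (Set.range e.1)

lemma subset_step [Nonempty α] (r : ℕ) (c : Finset α → ℕ) (X : Set α) :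
    X ⊆ step r c X :=
  subset_union_left.trans subset_union_left

lemma Wempty_subset_step [Nonempty α] (r : ℕ) (c : Finset α → ℕ) (X : Set α) :
    Wset r c ∅ ⊆ step r c X :=
  subset_union_right.trans subset_union_left

lemma W_subset_step [Nonempty α] (r : ℕ) (c : Finset α → ℕ) (X : Set α)
    (e : mu.{u} r → α) (he : Set.range e ⊆ X) :
    Wset r c (Set.range e) ⊆ step r c X :=
  (subset_iUnion (fun e' : {e' : mu.{u} r → α // Set.range e' ⊆ X} =>
    Wset r c (Set.range e'.1)) ⟨e, he⟩).trans subset_union_right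

/-- The closure chain, indexed by the order type of `(ℶ_r)⁺`. -/
noncomputable def chain [Nonempty α] (r : ℕ) (c : Finset α → ℕ) : ii.{u} r → Set α :=
  WellFounded.fix wellFounded_lt
    (fun ξ ih => step r c (⋃ η : {η : ii.{u} r // η < ξ}, ih η.1 η.2))

lemma chain_eq [Nonempty α] (r : ℕ) (c : Finset α → ℕ) (ξ : ii.{u} r) :
    chain r c ξ = step r c (⋃ η : {η : ii.{u} r // η < ξ}, chain r c η.1) :=
  WellFounded.fix_eq _ _ _

lemma chain_mono [Nonempty α] (r : ℕ) (c : Finset α → ℕ) {η ξ : ii.{u} r} (h : η < ξ) :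
    chain r c η ⊆ chain r c ξ := by
  rw [chain_eq r c ξ]
  exact (subset_iUnion (fun η' : {η' : ii.{u} r // η' < ξ} => chain r c η'.1) ⟨η, h⟩).trans
    (subset_step _ _ _)

/-- The closed set. -/
noncomputable def Atot [Nonempty α] (r : ℕ) (c : Finset α → ℕ) : Set α :=
  ⋃ ξ : ii.{u} r, chain r c ξ

lemma mk_step_le [Nonempty α] (r : ℕ) (c : Finset α → ℕ) {X : Set α}
    (hX : #X ≤ 2 ^ Cardinal.beth.{u} r) :
    #(step r c X) ≤ 2 ^ Cardinal.beth.{u} r := by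
  set b := Cardinal.beth.{u} r with hbdef
  have hb : ℵ₀ ≤ b := aleph0_le_beth r
  have h2b : ℵ₀ ≤ 2 ^ b := (hb.trans (cantor b).le).trans (le_refl _) |>.trans (le_refl _)
  have hW0 : #(Wset r c (∅ : Set α)) ≤ 2 ^ b :=
    mk_Wset_le hb (by simp) r c
  have hU : #(⋃ e : {e : mu.{u} r → α // Set.range e ⊆ X}, Wset r c (Set.range e.1))
      ≤ 2 ^ b := by
    refine (mk_iUnion_le_sum_mk).trans ?_
    refine (sum_le_sum _ (fun _ => 2 ^ b) ?_).trans ?_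
    · intro e
      exact mk_Wset_le hb ((mk_range_le).trans (by rw [mk_ord_toType])) r c
    · rw [sum_const']
      have hidx : #{e : mu.{u} r → α // Set.range e ⊆ X} ≤ 2 ^ b := by
        have hinj : Function.Injective
            (fun e : {e : mu.{u} r → α // Set.range e ⊆ X} =>
              (fun m : mu.{u} r => (⟨e.1 m, e.2 ⟨m, rfl⟩⟩ : X))) := by
          intro e₁ e₂ h
          exact Subtype.ext (funext fun m => congrArg Subtype.val (congrFun h m))
        refine (mk_le_of_injective hinj).trans ?_
        rw [← power_def, mk_ord_toType]
        calc (#X) ^ b ≤ (2 ^ b) ^ b := power_le_power_right hX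
          _ = 2 ^ b := by rw [← power_mul, mul_eq_self hb]
      calc #{e : mu.{u} r → α // Set.range e ⊆ X} * 2 ^ b ≤ 2 ^ b * 2 ^ b :=
            mul_le_mul_left hidx _
        _ = 2 ^ b := mul_eq_self h2b
  calc #(step r c X) ≤ #(X ∪ Wset r c ∅ : Set α) +
        #(⋃ e : {e : mu.{u} r → α // Set.range e ⊆ X}, Wset r c (Set.range e.1)) :=
        mk_union_le _ _
    _ ≤ (#X + #(Wset r c (∅ : Set α))) +
        #(⋃ e : {e : mu.{u} r → α // Set.range e ⊆ X}, Wset r c (Set.range e.1)) :=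
        add_le_add_left (mk_union_le _ _) _
    _ ≤ (2 ^ b + 2 ^ b) + 2 ^ b := add_le_add (add_le_add hX hW0) hU
    _ = 2 ^ b := by rw [add_eq_self h2b, add_eq_self h2b]

lemma succ_beth_le (r : ℕ) : Order.succ (Cardinal.beth.{u} r) ≤ 2 ^ Cardinal.beth.{u} r :=
  Order.succ_le_of_lt (cantor _)

lemma mk_chain_le [Nonempty α] (r : ℕ) (c : Finset α → ℕ) (ξ : ii.{u} r) :
    #(chain r c ξ) ≤ 2 ^ Cardinal.beth.{u} r := by
  induction ξ using WellFoundedLT.induction with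
  | ind ξ ih =>
    rw [chain_eq]
    refine mk_step_le r c ?_
    refine (mk_iUnion_le_sum_mk).trans ?_
    refine (sum_le_sum _ (fun _ => 2 ^ Cardinal.beth.{u} r) (fun η : {η : ii.{u} r // η < ξ} => ih η.1 η.2)).trans ?_
    rw [sum_const']
    have h1 : #{η : ii.{u} r // η < ξ} < Order.succ (Cardinal.beth.{u} r) :=
      mk_Iio_ord_toType ξ
    have h2b : ℵ₀ ≤ 2 ^ Cardinal.beth.{u} r :=
      (aleph0_le_beth r).trans (cantor _).le
    calc #{η : ii.{u} r // η < ξ} * 2 ^ Cardinal.beth.{u} r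
        ≤ 2 ^ Cardinal.beth.{u} r * 2 ^ Cardinal.beth.{u} r :=
          mul_le_mul_left ((h1.le.trans (succ_beth_le r))) _
      _ = 2 ^ Cardinal.beth.{u} r := mul_eq_self h2b

lemma mk_Atot_le [Nonempty α] (r : ℕ) (c : Finset α → ℕ) :
    #(Atot r c) ≤ 2 ^ Cardinal.beth.{u} r := by
  refine (mk_iUnion_le_sum_mk).trans ?_
  refine (sum_le_sum _ (fun _ => 2 ^ Cardinal.beth.{u} r) (fun ξ => mk_chain_le r c ξ)).trans ?_
  rw [sum_const', mk_ord_toType]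
  have h2b : ℵ₀ ≤ 2 ^ Cardinal.beth.{u} r := (aleph0_le_beth r).trans (cantor _).le
  calc Order.succ (Cardinal.beth.{u} r) * 2 ^ Cardinal.beth.{u} r
      ≤ 2 ^ Cardinal.beth.{u} r * 2 ^ Cardinal.beth.{u} r :=
        mul_le_mul_left (succ_beth_le r) _
    _ = 2 ^ Cardinal.beth.{u} r := mul_eq_self h2b

lemma chain_subset_Atot [Nonempty α] (r : ℕ) (c : Finset α → ℕ) (ξ : ii.{u} r) :
    chain r c ξ ⊆ Atot r c :=
  subset_iUnion (chain r c) ξ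

end ErdosRadoAux

namespace ErdosRadoAux

variable {α : Type u}

instance nonempty_ii (r : ℕ) : Nonempty (ii.{u} r) := by
  rw [Ordinal.toType_nonempty_iff_ne_zero, ne_eq, Cardinal.ord_eq_zero]
  exact (Order.bot_lt_succ _).ne'

lemma Wset_subset_Atot [Nonempty α] (r : ℕ) (c : Finset α → ℕ) {B : Set α}
    (hBA : B ⊆ Atot r c) (hB : #B ≤ Cardinal.beth.{u} r) :
    Wset r c B ⊆ Atot r c := by
  rcases B.eq_empty_or_nonempty with rfl | hne
  · obtain ⟨ξ⟩ := nonempty_ii.{u} r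
    refine ((Wempty_subset_step r c
      (⋃ η : {η : ii.{u} r // η < ξ}, chain r c η.1)).trans ?_)
    rw [← chain_eq r c ξ]
    exact chain_subset_Atot r c ξ
  · -- choose stages for elements of `B`
    have hmem : ∀ b : B, ∃ ξ : ii.{u} r, (b : α) ∈ chain r c ξ := by
      intro b
      exact Set.mem_iUnion.1 (hBA b.2)
    choose F hF using hmem
    -- bound the stages
    haveI : IsWellOrder (ii.{u} r) (· < ·) := ⟨⟩
    have hbd : Set.Bounded (· < ·) (Set.range F) := by
      by_contra hnb
      have hcof : IsCofinal (Set.range F) := fun a => by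
        obtain ⟨b, hb, hba⟩ := (Set.not_bounded_iff _).1 hnb a
        exact ⟨b, hb, not_lt.1 hba⟩
      have h1 : #(Set.range F) ≤ Cardinal.beth.{u} r := (mk_range_le).trans hB
      have h3 := Order.cof_le hcof
      rw [Ordinal.cof_toType, (Cardinal.isRegular_succ (aleph0_le_beth r)).cof_ord] at h3
      exact (h1.trans_lt (Order.lt_succ _)).not_ge h3
    obtain ⟨ξ, hξ⟩ := hbd
    set U : Set α := ⋃ η : {η : ii.{u} r // η < ξ}, chain r c η.1 with hU
    have hBU : B ⊆ U := by
      intro b hb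
      exact Set.mem_iUnion.2 ⟨⟨F ⟨b, hb⟩, hξ _ ⟨⟨b, hb⟩, rfl⟩⟩, hF ⟨b, hb⟩⟩
    -- enumerate B by a surjection from `mu r`
    haveI hBne : Nonempty B := hne.to_subtype
    have hle : #B ≤ #(mu.{u} r) := by rw [mk_ord_toType]; exact hB
    obtain ⟨g⟩ := Cardinal.le_def _ _ |>.1 hle
    set e : mu.{u} r → α := fun m => (Function.invFun g m : B) with he
    have hrange : Set.range e = B := by
      have hsurj : Function.Surjective (Function.invFun g) :=
        Function.invFun_surjective g.injective
      rw [he]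
      have : Set.range (fun m => ((Function.invFun g m : B) : α))
          = Subtype.val '' Set.range (Function.invFun g) := by
        rw [← Set.range_comp]; rfl
      rw [this, hsurj.range_eq, Set.image_univ, Subtype.range_coe]
    have hsub : Wset r c B ⊆ step r c U := by
      rw [← hrange]
      exact W_subset_step r c U e (by rw [hrange]; exact hBU)
    refine hsub.trans ?_
    rw [← chain_eq r c ξ]
    exact chain_subset_Atot r c ξ

lemma exists_outside_Atot [Nonempty α] (r : ℕ) (c : Finset α → ℕ)
    (hα : Order.succ (2 ^ Cardinal.beth.{u} r) ≤ #α) :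
    ∃ x, x ∉ Atot r c := by
  by_contra h
  push_neg at h
  have huniv : (Set.univ : Set α) ⊆ Atot r c := fun a _ => h a
  have h1 : #α ≤ 2 ^ Cardinal.beth.{u} r := by
    rw [← mk_univ]
    exact (mk_le_mk_of_subset huniv).trans (mk_Atot_le r c)
  exact absurd ((Order.lt_succ (2 ^ Cardinal.beth.{u} r)).trans_le hα) h1.not_gt

/-- The homogeneous sequence: a transfinite sequence of elements of the closed set,
each realizing the same type as `x` over its predecessors. -/
noncomputable def Yseq [Nonempty α] (r : ℕ) (c : Finset α → ℕ) (x : α) : ii.{u} r → α :=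
  WellFounded.fix wellFounded_lt
    (fun ξ ih =>
      rep r c {a | ∃ η, ∃ h : η < ξ, ih η h = a}
        (tpf r c {a | ∃ η, ∃ h : η < ξ, ih η h = a} x))

/-- The set of predecessors of stage `ξ` in the homogeneous sequence. -/
def Bof [Nonempty α] (r : ℕ) (c : Finset α → ℕ) (x : α) (ξ : ii.{u} r) : Set α :=
  Yseq r c x '' {η | η < ξ}

lemma Yseq_eq [Nonempty α] (r : ℕ) (c : Finset α → ℕ) (x : α) (ξ : ii.{u} r) :
    Yseq r c x ξ = rep r c (Bof r c x ξ) (tpf r c (Bof r c x ξ) x) := by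
  have h : Bof r c x ξ = {a | ∃ η, ∃ _h : η < ξ, Yseq r c x η = a} := by
    ext a
    simp only [Bof, Set.mem_image, Set.mem_setOf_eq]
    exact ⟨fun ⟨η, h1, h2⟩ => ⟨η, h1, h2⟩, fun ⟨η, h1, h2⟩ => ⟨η, h1, h2⟩⟩
  rw [h]
  exact WellFounded.fix_eq _ _ _

lemma Yseq_spec [Nonempty α] (r : ℕ) (c : Finset α → ℕ) {x : α} (hx : x ∉ Atot r c)
    (ξ : ii.{u} r) :
    Yseq r c x ξ ∈ Atot r c ∧ Yseq r c x ξ ∉ Bof r c x ξ ∧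
      tpf r c (Bof r c x ξ) (Yseq r c x ξ) = tpf r c (Bof r c x ξ) x := by
  induction ξ using WellFoundedLT.induction with
  | ind ξ ih =>
    have hBA : Bof r c x ξ ⊆ Atot r c := by
      rintro a ⟨η, hη, rfl⟩
      exact (ih η hη).1
    have hB : #(Bof r c x ξ) ≤ Cardinal.beth.{u} r := by
      have h1 : #(Bof r c x ξ) ≤ #({η : ii.{u} r | η < ξ}) := mk_image_le
      have h2 : #({η : ii.{u} r | η < ξ}) < Order.succ (Cardinal.beth.{u} r) :=
        mk_Iio_ord_toType ξ
      exact Order.lt_succ_iff.1 (h1.trans_lt h2)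
    have hxB : x ∉ Bof r c x ξ := fun hmem => hx (hBA hmem)
    have hex : ∃ z, z ∉ Bof r c x ξ ∧
        tpf r c (Bof r c x ξ) z = tpf r c (Bof r c x ξ) x := ⟨x, hxB, rfl⟩
    have hspec := rep_spec hex
    rw [Yseq_eq r c x ξ]
    refine ⟨?_, hspec.1, hspec.2⟩
    exact Wset_subset_Atot r c hBA hB (rep_mem_Wset hxB)

lemma Yseq_injective [Nonempty α] (r : ℕ) (c : Finset α → ℕ) {x : α}
    (hx : x ∉ Atot r c) : Function.Injective (Yseq r c x) := by
  have key : ∀ η ξ : ii.{u} r, η < ξ → Yseq r c x η ≠ Yseq r c x ξ := by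
    intro η ξ h he
    exact (Yseq_spec r c hx ξ).2.1 ⟨η, h, he⟩
  intro η ξ he
  rcases lt_trichotomy η ξ with h | h | h
  · exact absurd he (key _ _ h)
  · exact h
  · exact absurd he.symm (key _ _ h)

lemma tpf_eval (r : ℕ) (c : Finset α → ℕ) (B : Set α) (z : α) {u : Finset α}
    (h1 : ↑u ⊆ B) (h2 : u.card = r + 1) [DecidableEq α] :
    tpf r c B z u = c (insert z u) := by
  simp only [tpf]
  rw [if_pos ⟨h1, h2⟩]
  congr!

end ErdosRadoAux

namespace ErdosRadoAux

lemma beth_nat_succ (r : ℕ) :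
    Cardinal.beth.{u} (r + 1 : ℕ) = 2 ^ Cardinal.beth.{u} r := by
  have : ((r + 1 : ℕ) : Ordinal) = Order.succ (r : Ordinal) := by
    rw [Nat.cast_add, Nat.cast_one, Ordinal.add_one_eq_succ]
  rw [this, Cardinal.beth_succ]

/-- **Erdős–Rado theorem**: a coloring of the `(r+1)`-subsets of a set of
cardinality at least `(ℶ_r)⁺` by countably many colors has an infinite
homogeneous set. -/
theorem erdosRado (r : ℕ) : ∀ (α : Type u), Order.succ (Cardinal.beth.{u} r) ≤ #α →
    ∀ c : Finset α → ℕ, ∃ (H : Set α) (n : ℕ), H.Infinite ∧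
      ∀ t : Finset α, t.card = r + 1 → ↑t ⊆ H → c t = n := by
  induction r with
  | zero =>
    intro α hα c
    have hℵ : Order.succ ℵ₀ ≤ #α := by
      rwa [show ((0 : ℕ) : Ordinal) = 0 by simp, beth_zero] at hα
    have hfib : ∃ n, {a : α | c {a} = n}.Infinite := by
      by_contra hfin
      push_neg at hfin
      have hcov : (Set.univ : Set α) = ⋃ n, {a : α | c {a} = n} := by
        ext a
        simp only [Set.mem_univ, Set.mem_iUnion, Set.mem_setOf_eq, true_iff]
        exact ⟨c {a}, rfl⟩
      have hcount : (Set.univ : Set α).Countable := by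
        rw [hcov]
        exact Set.countable_iUnion fun n => (hfin n).countable
      haveI : Countable α := Set.countable_univ_iff.mp hcount
      exact absurd ((Order.lt_succ ℵ₀).trans_le hℵ) (Cardinal.mk_le_aleph0).not_gt
    obtain ⟨n, hn⟩ := hfib
    refine ⟨{a : α | c {a} = n}, n, hn, ?_⟩
    intro t hcard hsub
    obtain ⟨a, rfl⟩ := Finset.card_eq_one.mp hcard
    exact hsub (by simp)
  | succ r IH =>
    intro α hα c
    classical
    haveI : Nonempty α := by
      rw [← Cardinal.mk_ne_zero_iff]
      intro h0
      rw [h0] at hα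
      exact absurd (hα.trans_lt' (Order.bot_lt_succ _)) (lt_irrefl 0).elim
    have hα' : Order.succ (2 ^ Cardinal.beth.{u} r) ≤ #α := by
      rw [← beth_nat_succ]; exact hα
    obtain ⟨x, hx⟩ := exists_outside_Atot r c hα'
    set Y : ii.{u} r → α := Yseq r c x with hY
    have hYinj : Function.Injective Y := Yseq_injective r c hx
    set d : Finset (ii.{u} r) → ℕ := fun s => c (insert x (s.image Y)) with hd
    obtain ⟨H, n, hHinf, hhom⟩ := IH (ii.{u} r) (by rw [mk_ord_toType]) d
    refine ⟨Y '' H, n, hHinf.image (hYinj.injOn), ?_⟩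
    intro t hcard hsub
    -- pull `t` back to a finset of indices
    set s' : Finset (ii.{u} r) := t.preimage Y (hYinj.injOn) with hs'
    have him : s'.image Y = t := by
      rw [hs', Finset.image_preimage, Finset.filter_true_of_mem]
      intro a ha
      obtain ⟨η, -, rfl⟩ := hsub ha
      exact ⟨η, rfl⟩
    have hcard' : s'.card = r + 2 := by
      rw [← hcard, ← him, Finset.card_image_of_injective _ hYinj]
    have hs'H : ↑s' ⊆ H := by
      intro η hη
      rw [hs', Finset.mem_coe, Finset.mem_preimage] at hη
      obtain ⟨η', hη', he⟩ := hsub hη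
      rwa [← hYinj he]
    have hs'ne : s'.Nonempty := Finset.card_pos.mp (by omega)
    set ξ : ii.{u} r := s'.max' hs'ne with hξ
    set s : Finset (ii.{u} r) := s'.erase ξ with hsdef
    have hscard : s.card = r + 1 := by
      rw [hsdef, Finset.card_erase_of_mem (s'.max'_mem hs'ne), hcard']
      omega
    have hslt : ∀ η ∈ s, η < ξ := by
      intro η hη
      rw [hsdef, Finset.mem_erase] at hη
      exact lt_of_le_of_ne (Finset.le_max' s' η hη.2) hη.1
    set u : Finset α := s.image Y with hu
    have hucard : u.card = r + 1 := by
      rw [hu, Finset.card_image_of_injective _ hYinj, hscard]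
    have husub : ↑u ⊆ Bof r c x ξ := by
      intro a ha
      rw [hu, Finset.coe_image] at ha
      obtain ⟨η, hη, rfl⟩ := ha
      exact ⟨η, hslt η hη, rfl⟩
    have ht : t = insert (Y ξ) u := by
      rw [← him, hu, hsdef, ← Finset.image_insert, Finset.insert_erase (s'.max'_mem hs'ne)]
    have htpf := congrFun (Yseq_spec r c hx ξ).2.2 u
    rw [tpf_eval r c _ _ husub hucard, tpf_eval r c _ _ husub hucard] at htpf
    have hds : d s = n := hhom s hscard (fun η hη =>
      hs'H (Finset.mem_coe.mpr (Finset.erase_subset _ _ (Finset.mem_coe.mp hη))))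
    rw [ht, htpf]
    rw [hd] at hds
    exact hds

end ErdosRadoAux

/-- **Box form of the Erdős–Rado theorem.** If `S` has cardinality at least the
successor of the beth number `ℶ_r` and `f` is a symmetric `ℕ`-coloring of ordered
`(r+1)`-tuples from `S`, then there are pairwise disjoint countably infinite subsets
`S_0, …, S_r` of `S` whose product is monochromatic for `f`. -/
theorem erdos_rado_box (r : ℕ) (S : Type*)
    (hS : Order.succ (Cardinal.beth r) ≤ Cardinal.mk S)
    (f : (Fin (r + 1) → S) → ℕ)
    (hsym : ∀ (g : Fin (r + 1) → S) (σ : Equiv.Perm (Fin (r + 1))), f (g ∘ σ) = f g) :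
    ∃ (n : ℕ) (T : Fin (r + 1) → Set S),
      (Pairwise fun i j => Disjoint (T i) (T j)) ∧
      (∀ i, (T i).Countable ∧ (T i).Infinite) ∧
      ∀ g : Fin (r + 1) → S, (∀ i, g i ∈ T i) → f g = n := by
  classical
  -- the induced coloring of `(r+1)`-element subsets
  set c : Finset S → ℕ := fun t =>
    if h : t.toList.length = r + 1 then f (fun i => t.toList.get (Fin.cast h.symm i)) else 0
    with hc
  obtain ⟨H, n, hHinf, hhom⟩ := ErdosRadoAux.erdosRado r S hS c
  -- `f` takes value `n` on injective tuples with range in `H`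
  have key : ∀ g : Fin (r + 1) → S, Function.Injective g →
      (∀ i, g i ∈ H) → f g = n := by
    intro g hginj hgH
    set t : Finset S := Finset.image g Finset.univ with htdef
    have htcard : t.card = r + 1 := by
      rw [htdef, Finset.card_image_of_injective _ hginj, Finset.card_univ, Fintype.card_fin]
    have htH : ↑t ⊆ H := by
      intro a ha
      rw [htdef, Finset.coe_image] at ha
      obtain ⟨i, -, rfl⟩ := ha
      exact hgH i
    have hct : c t = n := hhom t htcard htH
    have hlen : t.toList.length = r + 1 := by rw [Finset.length_toList, htcard]
    set e : Fin (r + 1) → S := fun i => t.toList.get (Fin.cast hlen.symm i) with he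
    have hce : c t = f e := by rw [hc]; simp only; rw [dif_pos hlen]
    -- both `g` and `e` are bijections onto `t`
    have hemem : ∀ i, e i ∈ t := by
      intro i
      rw [he, ← Finset.mem_toList]
      apply List.get_mem
    have heinj : Function.Injective e := by
      have hnd := t.nodup_toList
      intro i j hij
      have := List.nodup_iff_injective_get.mp hnd hij
      exact Fin.ext (by simpa using congrArg Fin.val this)
    have hgmem : ∀ i, g i ∈ t := fun i => Finset.mem_image_of_mem g (Finset.mem_univ i)
    have hcardt : Fintype.card t = Fintype.card (Fin (r + 1)) := by
      rw [Fintype.card_coe, htcard, Fintype.card_fin]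
    have hgbij : Function.Bijective (fun i => (⟨g i, hgmem i⟩ : t)) :=
      (Fintype.bijective_iff_injective_and_card _).mpr
        ⟨fun i j hij => hginj (congrArg Subtype.val hij), hcardt.symm⟩
    have hebij : Function.Bijective (fun i => (⟨e i, hemem i⟩ : t)) :=
      (Fintype.bijective_iff_injective_and_card _).mpr
        ⟨fun i j hij => heinj (congrArg Subtype.val hij), hcardt.symm⟩
    set G := Equiv.ofBijective _ hgbij with hG
    set E := Equiv.ofBijective _ hebij with hE
    have hcomp : g ∘ (E.trans G.symm) = e := by
      funext i
      show g (G.symm (E i)) = e i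
      have h2 : G (G.symm (E i)) = E i := G.apply_symm_apply _
      calc g (G.symm (E i)) = (G (G.symm (E i)) : S) := rfl
        _ = (E i : S) := by rw [h2]
        _ = e i := rfl
    rw [← hct, hce, ← hcomp, hsym]
  -- split an infinite subset of `H` into `r+1` disjoint infinite pieces
  haveI : Infinite H := hHinf.to_subtype
  set E0 : ℕ ↪ H := Infinite.natEmbedding H with hE0
  set T : Fin (r + 1) → Set S := fun i => Set.range (fun k : ℕ => (E0 (i.1 + (r + 1) * k) : S))
    with hT
  have hTmem : ∀ i a, a ∈ T i → ∃ k, a = (E0 (i.1 + (r + 1) * k) : S) := by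
    intro i a ha
    obtain ⟨k, hk⟩ := ha
    exact ⟨k, hk.symm⟩
  have hTH : ∀ i, T i ⊆ H := by
    rintro i a ⟨k, rfl⟩
    exact (E0 (i.1 + (r + 1) * k)).2
  have hdisj : Pairwise fun i j => Disjoint (T i) (T j) := by
    intro i j hij
    rw [Set.disjoint_left]
    rintro a ⟨k, rfl⟩ ⟨k', hk'⟩
    have h1 : E0 (j.1 + (r + 1) * k') = E0 (i.1 + (r + 1) * k) := Subtype.ext hk'
    have h2 : j.1 + (r + 1) * k' = i.1 + (r + 1) * k := E0.injective h1
    have h3 : j.1 = i.1 := by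
      have hmod := congrArg (· % (r + 1)) h2
      simpa [Nat.add_mul_mod_self_left, Nat.mod_eq_of_lt i.isLt,
        Nat.mod_eq_of_lt j.isLt] using hmod
    exact hij (Fin.ext h3.symm)
  refine ⟨n, T, hdisj, ?_, ?_⟩
  · intro i
    constructor
    · exact Set.countable_range _
    · apply Set.infinite_range_of_injective
      intro k k' hkk'
      have h1 := E0.injective (Subtype.ext hkk')
      have h2 : (r + 1) * k = (r + 1) * k' := Nat.add_left_cancel h1
      exact Nat.eq_of_mul_eq_mul_left (Nat.succ_pos r) h2
  · intro g hg
    have hginj : Function.Injective g := by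
      intro i j hij
      by_contra hne
      exact Set.disjoint_left.mp (hdisj hne) (hg i) (hij ▸ hg j)
    exact key g hginj fun i => hTH i (hg i)
end

section
/- Let R be a commutative ring, S a type, and x : S → R a family of elements such that for all distinct s, s' ∈ S the annihilators of x s and x s' intersect trivially (i.e. if r · x s = 0 and r · x s' = 0 then r = 0). Then the R-linear map F : (S →₀ R) → R × (S →₀ R) defined by F(a) = (∑_{s ∈ supp a} a s, (s ↦ a s · x s)) is injective. -/
open Finset

/-- If the annihilators of `x s` and `x s'` intersect trivially for all distinct
`s, s'`, then the `R`-linear map `F : (S →₀ R) → R × (S →₀ R)`,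
`a ↦ (∑ s, a s, (s ↦ a s * x s))`, is injective. -/
theorem f_RS_injective (R : Type*) (S : Type*) [CommRing R] (x : S → R)
    (hx : ∀ s s' : S, s ≠ s' → ∀ r : R, r * x s = 0 → r * x s' = 0 → r = 0)
    (F : (S →₀ R) →ₗ[R] R × (S →₀ R))
    (hF : ∀ a : S →₀ R,
      F a = (∑ s ∈ a.support, a s, a.sum fun s r => Finsupp.single s (r * x s))) :
    Function.Injective F := by
  classical
  have peel : ∀ (T : Finset S) (i : S) (r : R), i ∉ T → r * x i = 0 →
      r * ∏ j ∈ T, x j = 0 → r = 0 := by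
    intro T
    induction T using Finset.induction_on with
    | empty => intro i r _ _ h; simpa using h
    | @insert j T' hj ih =>
      intro i r hi hri h
      have hij : i ≠ j := fun e => hi (by rw [e]; exact Finset.mem_insert_self j T')
      have hiT' : i ∉ T' := fun h' => hi (Finset.mem_insert_of_mem h')
      rw [Finset.prod_insert hj] at h
      have hu : (r * ∏ j ∈ T', x j) = 0 := by
        apply hx i j hij
        · have : (r * ∏ j ∈ T', x j) * x i = (∏ j ∈ T', x j) * (r * x i) := by ring
          rw [this, hri, mul_zero]
        · have : (r * ∏ j ∈ T', x j) * x j = r * (x j * ∏ j ∈ T', x j) := by ring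
          rw [this, h]
      exact ih i r hiT' hri hu
  rw [injective_iff_map_eq_zero]
  intro a ha
  rw [hF a, Prod.ext_iff] at ha
  obtain ⟨h1, h2⟩ := ha
  simp only [Prod.fst_zero, Prod.snd_zero] at h1 h2
  have hax : ∀ t, a t * x t = 0 := by
    intro t
    have ht := congrArg (fun f : S →₀ R => f t) h2
    simp only [Finsupp.sum_apply, Finsupp.single_apply, Finsupp.coe_zero,
      Pi.zero_apply] at ht
    rw [Finsupp.sum_ite_eq' a t (fun s r => r * x s)] at ht
    by_cases hmem : t ∈ a.support
    · rwa [if_pos hmem] at ht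
    · rw [Finsupp.notMem_support_iff.mp hmem, zero_mul]
  ext s
  by_cases hs : s ∈ a.support
  · have hsum : a s + ∑ l ∈ a.support.erase s, a l = 0 := by
      rw [Finset.add_sum_erase _ _ hs]; exact h1
    have hprod : a s * ∏ j ∈ a.support.erase s, x j = 0 := by
      have : a s = -∑ l ∈ a.support.erase s, a l := eq_neg_of_add_eq_zero_left hsum
      rw [this, neg_mul, Finset.sum_mul, neg_eq_zero]
      apply Finset.sum_eq_zero
      intro l hl
      rw [← Finset.mul_prod_erase _ _ hl, ← mul_assoc, hax l, zero_mul]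
    have := peel (a.support.erase s) s (a s) (Finset.notMem_erase s _) (hax s) hprod
    simpa using this
  · simpa using Finsupp.notMem_support_iff.mp hs
end

section
/- Let k be a commutative ring, R a commutative k-algebra, n ≥ 1, and x : Fin n → R a family of elements. In the n-fold tensor power R^{⊗_k n}, let t_i denote the pure tensor whose i-th factor is x i and all other factors are 1. Then the quotient of R^{⊗_k n} by the ideal generated by t_1, …, t_n is isomorphic, as a k-algebra, to the n-fold tensor product over k of the quotients R ⧸ (x i): R^{⊗_k n} ⧸ (t_1, …, t_n) ≅ ⨂_{i=1,k}^{n} R ⧸ (x i). -/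
open scoped TensorProduct PiTensorProduct

open PiTensorProduct in
/-- The quotient of the `n`-fold tensor power `R^{⊗ₖ n}` by the ideal generated by the
pure tensors `t_i = 1 ⊗ ⋯ ⊗ x i ⊗ ⋯ ⊗ 1` is isomorphic as a `k`-algebra to the
`n`-fold tensor product over `k` of the quotients `R ⧸ (x i)`. -/
theorem quotient_span_tensor_iso (k R : Type*) [CommRing k] [CommRing R] [Algebra k R]
    (n : ℕ) (hn : 1 ≤ n) (x : Fin n → R) :
    Nonempty (
      ((⨂[k] (_ : Fin n), R) ⧸ Ideal.span (Set.range fun i : Fin n =>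
          (PiTensorProduct.tprod k (Function.update (fun _ : Fin n => (1 : R)) i (x i)) :
            ⨂[k] (_ : Fin n), R)))
        ≃ₐ[k] ⨂[k] (i : Fin n), (R ⧸ Ideal.span {x i})) := by
  classical
  set I : Ideal (⨂[k] (_ : Fin n), R) := Ideal.span (Set.range fun i : Fin n =>
      (PiTensorProduct.tprod k (Function.update (fun _ : Fin n => (1 : R)) i (x i)) :
        ⨂[k] (_ : Fin n), R)) with hI
  set Q := (⨂[k] (_ : Fin n), R) ⧸ I
  set T := ⨂[k] (i : Fin n), (R ⧸ Ideal.span {x i})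
  have mem_gen : ∀ i : Fin n,
      (singleAlgHom (R := k) (A := fun _ : Fin n => R) i) (x i) ∈ I := by
    intro i
    apply Ideal.subset_span
    exact ⟨i, rfl⟩
  let φ : (⨂[k] (_ : Fin n), R) →ₐ[k] T :=
    liftAlgHom (MultilinearMap.compLinearMap
        (PiTensorProduct.tprod k :
          MultilinearMap k (fun i : Fin n => R ⧸ Ideal.span {x i}) T)
        (fun i => (Ideal.Quotient.mkₐ k (Ideal.span {x i})).toLinearMap))
      (by simp [PiTensorProduct.one_def]; rfl)
      (fun a b => by
        simp only [MultilinearMap.compLinearMap_apply, AlgHom.toLinearMap_apply, Pi.mul_apply,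
          _root_.map_mul]
        exact (PiTensorProduct.tprod_mul_tprod
          (fun i => Ideal.Quotient.mk (Ideal.span {x i}) (a i))
          (fun i => Ideal.Quotient.mk (Ideal.span {x i}) (b i))).symm)
  have hφ_tprod : ∀ f : Fin n → R, φ (tprod k f)
      = tprod k (fun j => Ideal.Quotient.mk (Ideal.span {x j}) (f j)) := by
    intro f
    simp [φ, liftAlgHom, PiTensorProduct.lift.tprod]
  have hφI : ∀ a ∈ I, φ a = 0 := by
    rw [hI]
    intro a ha
    have : Ideal.span (Set.range fun i : Fin n =>
        (PiTensorProduct.tprod k (Function.update (fun _ : Fin n => (1 : R)) i (x i)) :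
          ⨂[k] (_ : Fin n), R)) ≤ RingHom.ker φ := by
      rw [Ideal.span_le]
      rintro _ ⟨i, rfl⟩
      simp only [SetLike.mem_coe, RingHom.mem_ker]
      rw [hφ_tprod]
      have h0 : (fun j => Ideal.Quotient.mk (Ideal.span {x j})
            (Function.update (fun _ : Fin n => (1 : R)) i (x i) j))
          = Function.update (fun j : Fin n =>
              (1 : R ⧸ Ideal.span {x j})) i (Ideal.Quotient.mk (Ideal.span {x i}) (x i)) := by
        funext j
        by_cases h : j = i
        · subst h; simp
        · simp [Function.update_of_ne h]
      rw [h0]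
      have hx0 : Ideal.Quotient.mk (Ideal.span {x i}) (x i) = 0 := by
        rw [Ideal.Quotient.eq_zero_iff_mem]; exact Ideal.subset_span rfl
      rw [hx0]
      exact MultilinearMap.map_update_zero _ _ _
    exact this ha
  let φbar : Q →ₐ[k] T := Ideal.Quotient.liftₐ I φ hφI
  -- the backward maps
  let g : ∀ i : Fin n, (R ⧸ Ideal.span {x i}) →ₐ[k] Q := fun i =>
    Ideal.Quotient.liftₐ (Ideal.span {x i})
      ((Ideal.Quotient.mkₐ k I).comp (singleAlgHom (R := k) (A := fun _ : Fin n => R) i))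
      (by
        intro a ha
        rw [Ideal.mem_span_singleton] at ha
        obtain ⟨c, rfl⟩ := ha
        simp only [AlgHom.comp_apply, _root_.map_mul]
        have : (Ideal.Quotient.mkₐ k I) ((singleAlgHom (R := k) (A := fun _ : Fin n => R) i)
            (x i)) = 0 := by
          rw [Ideal.Quotient.mkₐ_eq_mk, Ideal.Quotient.eq_zero_iff_mem]
          exact mem_gen i
        rw [this, zero_mul])
  let ψ : T →ₐ[k] Q :=
    liftAlgHom ((MultilinearMap.mkPiAlgebra k (Fin n) Q).compLinearMap
        (fun i => (g i).toLinearMap))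
      (by simp)
      (fun a b => by
        simp only [MultilinearMap.compLinearMap_apply, AlgHom.toLinearMap_apply,
          MultilinearMap.mkPiAlgebra_apply, Pi.mul_apply, _root_.map_mul]
        rw [Finset.prod_mul_distrib])
  have hψ_tprod : ∀ f : ∀ i : Fin n, R ⧸ Ideal.span {x i},
      ψ (tprod k f) = ∏ j : Fin n, (g j) (f j) := by
    intro f
    show PiTensorProduct.lift _ (tprod k f) = _
    rw [PiTensorProduct.lift.tprod]
    simp
  -- key computations on single elements
  have hψ_single : ∀ (i : Fin n) (r : R),
      ψ (singleAlgHom (R := k) i (Ideal.Quotient.mk (Ideal.span {x i}) r))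
        = Ideal.Quotient.mkₐ k I (singleAlgHom (R := k) (A := fun _ : Fin n => R) i r) := by
    intro i r
    show ψ (tprod k (MonoidHom.mulSingle (fun j : Fin n => R ⧸ Ideal.span {x j}) i
        (Ideal.Quotient.mk (Ideal.span {x i}) r))) = _
    rw [hψ_tprod, Finset.prod_eq_single i]
    · simp only [MonoidHom.mulSingle_apply, Pi.mulSingle_eq_same]
      show (g i) (Ideal.Quotient.mk (Ideal.span {x i}) r) = _
      simp [g, Ideal.Quotient.liftₐ_apply]
      rfl
    · intro j _ hj
      rw [MonoidHom.mulSingle_apply, Pi.mulSingle_eq_of_ne hj, _root_.map_one]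
    · intro h; exact absurd (Finset.mem_univ i) h
  have hφ_single : ∀ (i : Fin n) (r : R),
      φbar (Ideal.Quotient.mkₐ k I (singleAlgHom (R := k) (A := fun _ : Fin n => R) i r))
        = singleAlgHom (R := k) i (Ideal.Quotient.mk (Ideal.span {x i}) r) := by
    intro i r
    rw [show φbar (Ideal.Quotient.mkₐ k I (singleAlgHom (R := k)
        (A := fun _ : Fin n => R) i r)) = φ (singleAlgHom (R := k)
        (A := fun _ : Fin n => R) i r) from rfl]
    show φ (tprod k (MonoidHom.mulSingle (fun _ : Fin n => R) i r)) = tprod k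
      (MonoidHom.mulSingle (fun j : Fin n => R ⧸ Ideal.span {x j}) i
        (Ideal.Quotient.mk (Ideal.span {x i}) r))
    rw [hφ_tprod]
    congr 1
    funext j
    by_cases h : j = i
    · subst h; simp
    · rw [MonoidHom.mulSingle_apply, Pi.mulSingle_eq_of_ne h, _root_.map_one,
        MonoidHom.mulSingle_apply, Pi.mulSingle_eq_of_ne h]
  refine ⟨AlgEquiv.ofAlgHom φbar ψ ?_ ?_⟩
  · apply PiTensorProduct.algHom_ext
    intro i
    ext a
    obtain ⟨r, rfl⟩ := Ideal.Quotient.mk_surjective a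
    simp only [AlgHom.comp_apply, AlgHom.coe_comp, Function.comp_apply, AlgHom.id_apply]
    rw [hψ_single i r, hφ_single i r]
  · apply Ideal.Quotient.algHom_ext
    apply PiTensorProduct.algHom_ext
    intro i
    ext r
    simp only [AlgHom.comp_apply, AlgHom.coe_comp, Function.comp_apply, AlgHom.id_apply]
    rw [hφ_single i r, hψ_single i r]
end

section
/- Let n ≥ 1, and let k be a field whose cardinality is at least the cardinal successor of the beth number ℶ_{n−1}. Let H : k → k be a function that is not polynomial on any countably infinite subset of k. Then there do NOT exist families of multivariable polynomials f_i, g_i indexed by i ∈ Fin n, where f : Fin n → ((Fin n → k) → MvPolynomial (Fin n) k) satisfies f i t = f i t' whenever t j = t' j for all j ≠ i (i.e. f i depends only on the coordinates other than i), and g : Fin n → ((Fin n → k) → MvPolynomial (Fin n) k), such that for every point t : Fin n → k one has the identity of polynomials in k[x_1,…,x_n]: ∑_{i} f i (t) + ∑_{i} (X i − C (t i)) · g i (t) = C (∏_{i} H (t i)). -/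
section Toolkit

open Polynomial Finset

variable {k : Type} [Field k]

/-- Divided-difference weights: leading coefficient of the Lagrange basis polynomials. -/
noncomputable def lagW {N : ℕ} (v : Fin N → k) (j : Fin N) : k :=
  (Lagrange.basis Finset.univ v j).coeff (N - 1)

lemma lagW_ne_zero {N : ℕ} {v : Fin N → k} (hv : Function.Injective v) (j : Fin N) :
    lagW v j ≠ 0 := by
  have hinj : Set.InjOn v (Finset.univ : Finset (Fin N)) := hv.injOn
  have h1 : (Lagrange.basis Finset.univ v j).natDegree = N - 1 := by
    rw [Lagrange.natDegree_basis hinj (mem_univ j)]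
    simp
  have h2 : Lagrange.basis Finset.univ v j ≠ 0 :=
    Lagrange.basis_ne_zero hinj (mem_univ j)
  have : lagW v j = (Lagrange.basis Finset.univ v j).leadingCoeff := by
    rw [lagW, Polynomial.leadingCoeff, h1]
  rw [this]
  exact leadingCoeff_ne_zero.mpr h2

lemma sum_lagW_eq_coeff_interpolate {N : ℕ} (v : Fin N → k) (r : Fin N → k) :
    ∑ j, r j * lagW v j = (Lagrange.interpolate Finset.univ v r).coeff (N - 1) := by
  rw [Lagrange.interpolate_apply, Polynomial.finset_sum_coeff]
  exact Finset.sum_congr rfl fun j _ => by rw [coeff_C_mul, lagW]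

/-- The divided-difference functional kills polynomials of degree `< N - 1`. -/
lemma sum_lagW_eval_eq_zero {N : ℕ} {v : Fin N → k} (hv : Function.Injective v)
    (q : k[X]) (hq : q.degree < ((N - 1 : ℕ) : WithBot ℕ)) :
    ∑ j, Polynomial.eval (v j) q * lagW v j = 0 := by
  have hinj : Set.InjOn v (Finset.univ : Finset (Fin N)) := hv.injOn
  have hcard : ((Finset.univ : Finset (Fin N)).card : WithBot ℕ) = (N : WithBot ℕ)  := by simp
  have hlt : q.degree < ((Finset.univ : Finset (Fin N)).card : WithBot ℕ) := by
    rw [hcard]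
    exact lt_of_lt_of_le hq (by exact_mod_cast Nat.cast_le.mpr (Nat.sub_le N 1))
  have hq2 := Lagrange.eq_interpolate hinj hlt
  rw [sum_lagW_eq_coeff_interpolate, ← hq2]
  exact Polynomial.coeff_eq_zero_of_degree_lt hq

/-- Either we find nodes in `A` where the divided difference of `H` of prescribed order
is nonzero, or `H` would be polynomial on a countably infinite set. -/
lemma exists_good_nodes (H : k → k)
    (hH : ∀ S : Set k, S.Countable → S.Infinite →
      ¬ ∃ p : Polynomial k, ∀ x ∈ S, H x = p.eval x)
    {A : Set k} (hA : A.Infinite) (d : ℕ) :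
    ∃ v : Fin (d + 2) → k, Function.Injective v ∧ (∀ j, v j ∈ A) ∧
      ∑ j, H (v j) * lagW v j ≠ 0 := by
  by_contra hcon
  push_neg at hcon
  set e := Set.Infinite.natEmbedding A hA with he
  set x : ℕ → k := fun m => (e m : k) with hx
  have hxinj : Function.Injective x := fun a b hab => e.injective (Subtype.ext hab)
  have hxmem : ∀ m, x m ∈ A := fun m => (e m).2
  set v0 : Fin (d + 1) → k := fun j => x j with hv0
  have hv0inj : Function.Injective v0 := by
    intro a b hab
    exact Fin.ext (by exact_mod_cast congrArg id (hxinj hab))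
  set Q : Polynomial k :=
    Lagrange.interpolate Finset.univ v0 (fun j => H (v0 j)) with hQ
  have hQdeg : Q.degree < ((d + 1 : ℕ) : WithBot ℕ) := by
    have := Lagrange.degree_interpolate_lt (s := Finset.univ) (r := fun j => H (v0 j)) hv0inj.injOn
    rw [hQ]
    simpa using this
  -- every x m with m ≥ d+1 satisfies H (x m) = Q.eval (x m)
  have key : ∀ m, d + 1 ≤ m → H (x m) = Q.eval (x m) := by
    intro m hm
    set v : Fin (d + 2) → k := Fin.snoc v0 (x m) with hv
    have hvcast : ∀ j : Fin (d + 1), v j.castSucc = x j := by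
      intro j; rw [hv]; simp [Fin.snoc_castSucc, hv0]
    have hvlast : v (Fin.last (d + 1)) = x m := by rw [hv]; simp
    have hvinj : Function.Injective v := by
      have hval : ∀ j : Fin (d + 2), ∃ mj : ℕ, v j = x mj ∧ ((j : ℕ) < d + 1 → mj = (j : ℕ)) ∧ ((j : ℕ) = d + 1 → mj = m) := by
        intro j
        refine Fin.lastCases ?_ ?_ j
        · exact ⟨m, hvlast, by intro h; simp at h, fun _ => rfl⟩
        · intro i
          refine ⟨(i : ℕ), hvcast i, fun _ => rfl, ?_⟩
          intro h
          have := i.isLt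
          simp at h
          omega
      intro a b hab
      obtain ⟨ma, hva, ha1, ha2⟩ := hval a
      obtain ⟨mb, hvb, hb1, hb2⟩ := hval b
      rw [hva, hvb] at hab
      have hmab := hxinj hab
      have hae : (a : ℕ) < d + 1 ∨ (a : ℕ) = d + 1 := by omega
      have hbe : (b : ℕ) < d + 1 ∨ (b : ℕ) = d + 1 := by omega
      have : (a : ℕ) = (b : ℕ) := by
        rcases hae with ha | ha <;> rcases hbe with hb | hb
        · rw [ha1 ha, hb1 hb] at hmab; exact hmab
        · exfalso; rw [ha1 ha, hb2 hb] at hmab; omega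
        · exfalso; rw [ha2 ha, hb1 hb] at hmab; omega
        · omega
      exact Fin.ext this
    have hvmem : ∀ j, v j ∈ A := by
      intro j
      refine Fin.lastCases ?_ ?_ j
      · rw [hvlast]; exact hxmem m
      · intro i; rw [hvcast]; exact hxmem i
    have hzero := hcon v hvinj hvmem
    -- decompose the sum
    have hsplit : ∀ j : Fin (d + 2),
        H (v j) * lagW v j
          = Q.eval (v j) * lagW v j + (H (v j) - Q.eval (v j)) * lagW v j := by
      intro j; ring
    rw [Finset.sum_congr rfl (fun j _ => hsplit j), Finset.sum_add_distrib] at hzero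
    have hkill : ∑ j, Q.eval (v j) * lagW v j = 0 := by
      refine sum_lagW_eval_eq_zero hvinj Q ?_
      have : ((d + 2 : ℕ) - 1 : ℕ) = (d + 1 : ℕ) := by omega
      rw [this]
      exact hQdeg
    rw [hkill, zero_add] at hzero
    have hnodes : ∀ j : Fin (d + 1), H (v j.castSucc) - Q.eval (v j.castSucc) = 0 := by
      intro j
      rw [hvcast j]
      have : Polynomial.eval (v0 j) Q = H (v0 j) := by
        rw [hQ]
        exact Lagrange.eval_interpolate_at_node (r := fun j => H (v0 j)) hv0inj.injOn (Finset.mem_univ j)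
      have hxj : v0 j = x (j : ℕ) := rfl
      rw [← hxj, this]
      ring
    rw [Fin.sum_univ_castSucc] at hzero
    have hz2 : ∑ j : Fin (d + 1),
        (H (v j.castSucc) - Q.eval (v j.castSucc)) * lagW v j.castSucc = 0 := by
      refine Finset.sum_eq_zero fun j _ => ?_
      rw [hnodes j, zero_mul]
    rw [hz2, zero_add, hvlast] at hzero
    have := lagW_ne_zero hvinj (Fin.last (d + 1))
    have hsub : H (x m) - Q.eval (x m) = 0 := by
      by_contra hne
      exact (mul_ne_zero hne this) hzero
    exact sub_eq_zero.mp hsub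
  -- contradiction with hH on the countable infinite set
  set S : Set k := x '' {m | d + 1 ≤ m} with hS
  have hScount : S.Countable := (Set.to_countable _).image x
  have hSinf : S.Infinite := by
    refine Set.Infinite.image (hxinj.injOn) ?_
    have : {m | d + 1 ≤ m} = Set.Ici (d + 1) := rfl
    rw [this]
    exact Set.Ici_infinite _
  refine hH S hScount hSinf ⟨Q, ?_⟩
  rintro y ⟨m, hm, rfl⟩
  exact key m hm

open Cardinal

lemma succ_iterate_aleph0_le_beth (m : ℕ) :
    (Order.succ)^[m + 1] (Cardinal.aleph0 : Cardinal.{0}) ≤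
      Order.succ (Cardinal.beth (m : Ordinal)) := by
  induction m with
  | zero => simp [Cardinal.beth_zero]
  | succ m ih =>
      rw [Function.iterate_succ_apply']
      have h1 : Order.succ ((Order.succ)^[m + 1] (Cardinal.aleph0 : Cardinal.{0})) ≤
          Order.succ (Order.succ (Cardinal.beth (m : Ordinal))) := Order.succ_le_succ ih
      refine h1.trans (Order.succ_le_succ ?_)
      have h2 : Cardinal.beth ((m : Ordinal) + 1) = 2 ^ Cardinal.beth (m : Ordinal) :=
        by rw [← Order.succ_eq_add_one]; exact Cardinal.beth_succ _
      have h3 : ((m + 1 : ℕ) : Ordinal) = (m : Ordinal) + 1 := by push_cast; ring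
      rw [h3, h2]
      exact Order.succ_le_of_lt (Cardinal.cantor _)

lemma le_succ_iterate' (m : ℕ) (c : Cardinal.{0}) : c ≤ (Order.succ)^[m] c := by
  induction m with
  | zero => simp
  | succ m ih => rw [Function.iterate_succ_apply']; exact ih.trans (Order.le_succ _)

lemma succ_iterate_succ_eq (m : ℕ) (c : Cardinal.{0}) :
    (Order.succ)^[m + 1] c = (Order.succ)^[m] (Order.succ c) :=
  Function.iterate_succ_apply _ _ _

/-- Pigeonhole: a map to a type of smaller cardinality has an infinite fiber. -/
lemma exists_infinite_fiber'' {β : Type} {P : Type} (f : β → P) (μ : Cardinal.{0})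
    (hμ : Cardinal.aleph0 ≤ μ) (hP : Cardinal.mk P ≤ μ) (hβ : μ < Cardinal.mk β) :
    ∃ p : P, ((f ⁻¹' {p}) : Set β).Infinite := by
  set g : β → P ⊕ ℕ := fun b => Sum.inl (f b) with hg
  have hcard : Cardinal.mk (P ⊕ ℕ) < Cardinal.mk β := by
    have : Cardinal.mk (P ⊕ ℕ) = Cardinal.mk P + Cardinal.mk ℕ := by simpa using Cardinal.mk_sum P ℕ
    rw [this]
    have : Cardinal.mk P + Cardinal.mk ℕ ≤ μ + μ := by
      refine add_le_add hP ?_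
      rw [Cardinal.mk_nat]; exact hμ
    refine lt_of_le_of_lt this ?_
    rwa [Cardinal.add_eq_self hμ]
  have hinf : Infinite (P ⊕ ℕ) := Sum.infinite_of_right
  obtain ⟨a, ha⟩ := Cardinal.exists_infinite_fiber' g hcard
  cases a with
  | inl p =>
      refine ⟨p, ?_⟩
      have : (g ⁻¹' {Sum.inl p} : Set β) = f ⁻¹' {p} := by
        ext b; simp [hg]
      rw [← this]
      exact Set.infinite_coe_iff.mp ha
  | inr n =>
      exfalso
      have : (g ⁻¹' {Sum.inr n} : Set β) = ∅ := by
        ext b; simp [hg]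
      rw [Set.infinite_coe_iff, this] at ha
      exact ha (Set.finite_empty)

end Toolkit

open Finset in
lemma main_lemma (n : ℕ) (k : Type) [Field k] (H : k → k)
    (hH : ∀ S : Set k, S.Countable → S.Infinite →
      ¬ ∃ p : Polynomial k, ∀ x ∈ S, H x = p.eval x) :
    ∀ (m : ℕ) (I : Finset (Fin n)), I.card = m →
    ∀ (μ : Cardinal.{0}), Cardinal.aleph0 ≤ μ →
    ∀ (P : Type) (c : P → k) (G : P → Fin n → (Fin n → k) → k),
      Cardinal.mk P ≤ μ →
      (∀ p, c p ≠ 0) →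
      (∀ p, ∀ i ∈ I, ∀ t : Fin n → k, ∃ q : Polynomial k,
        ∀ s : k, G p i (Function.update t i s) = Polynomial.eval s q) →
    ∀ (C : Fin n → Set k), (∀ j ∈ I, (Order.succ)^[m] μ ≤ Cardinal.mk (C j)) →
      (∀ t : Fin n → k, (∀ j ∈ I, t j ∈ C j) →
        ∃ p, c p * ∏ i ∈ I, H (t i) = ∑ i ∈ I, G p i t) →
      False := by
  intro m
  induction m with
  | zero =>
      intro I hI μ hμ P c G hP hc hpoly C hC hid
      rw [Finset.card_eq_zero] at hI
      subst hI
      obtain ⟨p, hp⟩ := hid (fun _ => 0) (by intro j hj; exact absurd hj (Finset.notMem_empty j))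
      rw [Finset.prod_empty, Finset.sum_empty, mul_one] at hp
      exact hc p hp
  | succ m IH =>
      intro I hI μ hμ P c G hP hc hpoly C hC hid
      classical
      have hne : I.Nonempty := Finset.card_pos.mp (by omega)
      obtain ⟨j₀, hj₀⟩ := hne
      set I' : Finset (Fin n) := I.erase j₀ with hI'def
      have hI' : I'.card = m := by
        rw [hI'def, Finset.card_erase_of_mem hj₀, hI]
        omega
      -- extract a subset of C j₀ of cardinality succ μ
      have h1 : Order.succ μ ≤ Cardinal.mk (C j₀) := by
        refine le_trans ?_ (hC j₀ hj₀)
        rw [succ_iterate_succ_eq]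
        exact le_succ_iterate' m (Order.succ μ)
      obtain ⟨C', hC'sub, hC'card⟩ := Cardinal.le_mk_iff_exists_subset.mp h1
      set ν := Order.succ μ with hν
      have hμν : Cardinal.aleph0 ≤ ν := hμ.trans (Order.le_succ μ)
      -- the new index type
      let D := P × (Σ N : ℕ, Fin N → ↥C')
      let vOf : D → (Σ N : ℕ, Fin N → ↥C') := fun x => x.2
      let cc : D → k := fun x =>
        c x.1 * ∑ j : Fin x.2.1, H ((x.2.2 j : k)) * lagW (fun j' => (x.2.2 j' : k)) j
      let GG : D → Fin n → (Fin n → k) → k := fun x i t =>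
        ∑ j : Fin x.2.1,
          G x.1 i (Function.update t j₀ ((x.2.2 j : k))) * lagW (fun j' => (x.2.2 j' : k)) j
      let P' := {x : D // cc x ≠ 0}
      -- cardinality of the new index type
      have hD : Cardinal.mk D ≤ ν := by
        have h2 : Cardinal.mk (Σ N : ℕ, Fin N → ↥C') ≤ ν := by
          rw [Cardinal.mk_sigma]
          have h3 : ∀ N : ℕ, Cardinal.mk (Fin N → ↥C') ≤ ν := by
            intro N
            rw [← Cardinal.power_def, Cardinal.mk_fin, hC'card]
            exact Cardinal.power_nat_le hμν
          refine le_trans (Cardinal.sum_le_sum _ (fun _ => ν) h3) ?_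
          rw [Cardinal.sum_const', Cardinal.mk_nat]
          calc Cardinal.aleph0 * ν ≤ ν * ν := mul_le_mul' hμν le_rfl
            _ = ν := Cardinal.mul_eq_self hμν
        have h4 : Cardinal.mk D = Cardinal.mk P * Cardinal.mk (Σ N : ℕ, Fin N → ↥C') := by
          rw [Cardinal.mk_prod, Cardinal.lift_id, Cardinal.lift_id]
        rw [h4]
        calc Cardinal.mk P * Cardinal.mk (Σ N : ℕ, Fin N → ↥C')
            ≤ ν * ν := mul_le_mul' (hP.trans (Order.le_succ μ)) h2
          _ = ν := Cardinal.mul_eq_self hμν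
      have hP' : Cardinal.mk P' ≤ ν := le_trans (Cardinal.mk_subtype_le _) hD
      -- apply the induction hypothesis
      refine IH I' hI' ν hμν P' (fun x => cc x.1) (fun x => GG x.1)
        hP' (fun x => x.2) ?_ C ?_ ?_
      · -- polynomiality in the remaining variables
        intro x i hi t
        have hii : i ∈ I := Finset.mem_of_mem_erase hi
        have hij : i ≠ j₀ := Finset.ne_of_mem_erase hi
        choose qj hqj using fun j : Fin x.1.2.1 =>
          hpoly x.1.1 i hii (Function.update t j₀ ((x.1.2.2 j : k)))
        refine ⟨∑ j, qj j * Polynomial.C (lagW (fun j' => (x.1.2.2 j' : k)) j), ?_⟩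
        intro s
        have hcomm : ∀ j : Fin x.1.2.1,
            Function.update (Function.update t i s) j₀ ((x.1.2.2 j : k))
              = Function.update (Function.update t j₀ ((x.1.2.2 j : k))) i s :=
          fun j => Function.update_comm hij s ((x.1.2.2 j : k)) t
        show ∑ j : Fin x.1.2.1,
            G x.1.1 i (Function.update (Function.update t i s) j₀ ((x.1.2.2 j : k)))
              * lagW (fun j' => (x.1.2.2 j' : k)) j = _
        rw [Polynomial.eval_finset_sum]
        refine Finset.sum_congr rfl fun j _ => ?_
        rw [hcomm j, hqj j s, Polynomial.eval_mul, Polynomial.eval_C]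
      · -- cardinality of the C's on I'
        intro j hj
        rw [hν, ← succ_iterate_succ_eq]
        exact hC j (Finset.mem_of_mem_erase hj)
      · -- the new identity
        intro t ht
        have hts : ∀ s : ↥C', ∀ j ∈ I, Function.update t j₀ (s : k) j ∈ C j := by
          intro s j hj
          by_cases hjj : j = j₀
          · subst hjj
            rw [Function.update_self]
            exact hC'sub s.2
          · rw [Function.update_of_ne hjj]
            exact ht j (Finset.mem_erase.mpr ⟨hjj, hj⟩)
        choose u hu using fun s : ↥C' => hid (Function.update t j₀ (s : k)) (hts s)
        have hνlt : μ < Cardinal.mk ↥C' := by rw [hC'card]; exact Order.lt_succ μ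
        obtain ⟨p₀, hfib⟩ := exists_infinite_fiber'' u μ hμ hP hνlt
        obtain ⟨q0, hq0⟩ := hpoly p₀ j₀ hj₀ t
        set d := q0.natDegree with hd
        set A : Set k := Subtype.val '' (u ⁻¹' {p₀}) with hA
        have hAinf : A.Infinite :=
          hfib.image (Subtype.val_injective.injOn)
        obtain ⟨v, hvinj, hvmem, hlam⟩ := exists_good_nodes H hH hAinf d
        have hvd : ∀ j : Fin (d + 2), ∃ a : ↥C', u a = p₀ ∧ (a : k) = v j := by
          intro j
          obtain ⟨a, ha, hval⟩ := hvmem j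
          exact ⟨a, ha, hval⟩
        have hvC' : ∀ j : Fin (d + 2), v j ∈ C' := by
          intro j
          obtain ⟨a, _, hval⟩ := hvd j
          rw [← hval]; exact a.2
        set w : Fin (d + 2) → ↥C' := fun j => ⟨v j, hvC' j⟩ with hw
        have hwu : ∀ j, u (w j) = p₀ := by
          intro j
          obtain ⟨a, ha, hval⟩ := hvd j
          have : w j = a := Subtype.ext (by rw [hw]; exact hval.symm)
          rw [this, ha]
        have hwv : (fun j' : Fin (d + 2) => ((w j' : k))) = v := rfl
        set xstar : D := ⟨p₀, ⟨d + 2, w⟩⟩ with hxstar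
        have hccx : cc xstar = c p₀ * ∑ j, H (v j) * lagW v j := rfl
        have hccne : cc xstar ≠ 0 := by
          rw [hccx]; exact mul_ne_zero (hc p₀) hlam
        refine ⟨⟨xstar, hccne⟩, ?_⟩
        -- the degree bound for killing q0
        have hdeg : q0.degree < (((d + 2) - 1 : ℕ) : WithBot ℕ) := by
          have h5 : ((d + 2) - 1 : ℕ) = d + 1 := by omega
          rw [h5]
          refine lt_of_le_of_lt (Polynomial.degree_le_natDegree) ?_
          exact_mod_cast Nat.lt_succ_self d
        -- the pointwise identities
        have hEj : ∀ j : Fin (d + 2),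
            c p₀ * (H (v j) * ∏ i ∈ I', H (t i))
              = (∑ i ∈ I', G p₀ i (Function.update t j₀ (v j))) + Polynomial.eval (v j) q0 := by
          intro j
          have hid_j := hu (w j)
          rw [hwu j] at hid_j
          have hTj : (w j : k) = v j := rfl
          rw [hTj] at hid_j
          have hprod : ∏ i ∈ I, H (Function.update t j₀ (v j) i)
              = H (v j) * ∏ i ∈ I', H (t i) := by
            rw [← Finset.mul_prod_erase I _ hj₀, Function.update_self]
            congr 1
            refine Finset.prod_congr rfl fun i hi => ?_
            rw [Function.update_of_ne (Finset.ne_of_mem_erase hi)]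
          have hsum : ∑ i ∈ I, G p₀ i (Function.update t j₀ (v j))
              = (∑ i ∈ I', G p₀ i (Function.update t j₀ (v j)))
                + G p₀ j₀ (Function.update t j₀ (v j)) := by
            rw [Finset.sum_erase_add I _ hj₀]
          rw [hprod, hsum] at hid_j
          rw [hid_j, hq0 (v j)]
        -- assemble
        show cc xstar * ∏ i ∈ I', H (t i) = ∑ i ∈ I', GG xstar i t
        calc cc xstar * ∏ i ∈ I', H (t i)
            = ∑ j, (c p₀ * (H (v j) * ∏ i ∈ I', H (t i))) * lagW v j := by
              rw [hccx, Finset.mul_sum, Finset.sum_mul]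
              exact Finset.sum_congr rfl fun j _ => by ring
          _ = ∑ j, ((∑ i ∈ I', G p₀ i (Function.update t j₀ (v j)))
                + Polynomial.eval (v j) q0) * lagW v j := by
              exact Finset.sum_congr rfl fun j _ => by rw [hEj j]
          _ = (∑ j, (∑ i ∈ I', G p₀ i (Function.update t j₀ (v j))) * lagW v j)
                + ∑ j, Polynomial.eval (v j) q0 * lagW v j := by
              rw [← Finset.sum_add_distrib]
              exact Finset.sum_congr rfl fun j _ => by ring
          _ = ∑ j, (∑ i ∈ I', G p₀ i (Function.update t j₀ (v j))) * lagW v j := by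
              rw [sum_lagW_eval_eq_zero hvinj q0 hdeg, add_zero]
          _ = ∑ i ∈ I', ∑ j, G p₀ i (Function.update t j₀ (v j)) * lagW v j := by
              rw [Finset.sum_comm]
              exact Finset.sum_congr rfl fun j _ => Finset.sum_mul _ _ _
          _ = ∑ i ∈ I', GG xstar i t := rfl

open MvPolynomial

/-- **No-retraction statement.** Let `k` be a field of cardinality at least the successor
of `ℶ_{n-1}` and `H : k → k` a function that is not polynomial on any countably infinite
subset of `k`. Then there are no families of multivariable polynomials `f i t`, `g i t`
(with `f i t` depending only on the coordinates of `t` other than `i`) satisfying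
`∑ i, f i t + ∑ i, (X i - C (t i)) * g i t = C (∏ i, H (t i))` for every `t : Fin n → k`. -/
theorem no_polynomial_retraction (n : ℕ) (hn : 1 ≤ n) (k : Type) [Field k]
    (hk : Order.succ (Cardinal.beth ((n - 1 : ℕ) : Ordinal)) ≤ Cardinal.mk k)
    (H : k → k)
    (hH : ∀ S : Set k, S.Countable → S.Infinite →
      ¬ ∃ p : Polynomial k, ∀ x ∈ S, H x = p.eval x) :
    ¬ ∃ f g : Fin n → ((Fin n → k) → MvPolynomial (Fin n) k),
      (∀ (i : Fin n) (t t' : Fin n → k), (∀ j, j ≠ i → t j = t' j) → f i t = f i t') ∧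
      ∀ t : Fin n → k,
        (∑ i, f i t) + ∑ i, (X i - C (t i)) * g i t = C (∏ i, H (t i)) := by
  rintro ⟨f, g, hf, hfg⟩
  classical
  set G : Unit → Fin n → (Fin n → k) → k :=
    fun _ i t => MvPolynomial.eval t (f i t) with hG
  -- the pointwise identity
  have hid0 : ∀ t : Fin n → k, ∑ i, G () i t = ∏ i, H (t i) := by
    intro t
    have h := congrArg (MvPolynomial.eval t) (hfg t)
    rw [map_add, map_sum, map_sum, MvPolynomial.eval_C] at h
    have hz : ∀ i : Fin n,
        MvPolynomial.eval t ((X i - C (t i)) * g i t) = 0 := by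
      intro i
      rw [map_mul, map_sub, MvPolynomial.eval_X, MvPolynomial.eval_C, sub_self, zero_mul]
    rw [Finset.sum_congr rfl (fun i _ => hz i), Finset.sum_const, smul_zero, add_zero] at h
    exact h
  -- polynomiality in each variable
  have hpoly0 : ∀ i (t : Fin n → k), ∃ q : Polynomial k,
      ∀ s : k, G () i (Function.update t i s) = Polynomial.eval s q := by
    intro i t
    set Φ : MvPolynomial (Fin n) k →ₐ[k] Polynomial k :=
      MvPolynomial.aeval (fun j => if j = i then Polynomial.X else Polynomial.C (t j)) with hΦ
    refine ⟨Φ (f i t), ?_⟩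
    intro s
    have hft : f i (Function.update t i s) = f i t := by
      refine hf i (Function.update t i s) t fun j hj => ?_
      rw [Function.update_of_ne hj]
    have halg : (MvPolynomial.aeval (Function.update t i s) : MvPolynomial (Fin n) k →ₐ[k] k)
        = (Polynomial.aeval s).comp Φ := by
      refine MvPolynomial.algHom_ext fun j => ?_
      rw [MvPolynomial.aeval_X, AlgHom.comp_apply, hΦ, MvPolynomial.aeval_X]
      by_cases hj : j = i
      · subst hj; rw [if_pos rfl, Polynomial.aeval_X, Function.update_self]
      · rw [if_neg hj, Polynomial.aeval_C, Function.update_of_ne hj]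
        exact Algebra.algebraMap_self_apply (t j)
    have h1 : G () i (Function.update t i s)
        = MvPolynomial.eval (Function.update t i s) (f i t) := by
      rw [hG]; simp only; rw [hft]
    rw [h1]
    have h2 : MvPolynomial.eval (Function.update t i s) (f i t)
        = (MvPolynomial.aeval (Function.update t i s) :
            MvPolynomial (Fin n) k →ₐ[k] k) (f i t) := by
      rw [← MvPolynomial.coe_aeval_eq_eval]; rfl
    rw [h2, halg, AlgHom.comp_apply, ← Polynomial.coe_aeval_eq_eval]
  -- cardinality chain
  have hcard : (Order.succ)^[n] (Cardinal.aleph0 : Cardinal.{0}) ≤ Cardinal.mk k := by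
    have h3 : n - 1 + 1 = n := by omega
    have h4 := succ_iterate_aleph0_le_beth (n - 1)
    rw [h3] at h4
    exact h4.trans hk
  refine main_lemma n k H hH n Finset.univ (by simp) Cardinal.aleph0 le_rfl
    Unit (fun _ => (1 : k)) (fun _ => G ()) ?_ (fun _ => one_ne_zero) ?_
    (fun _ => Set.univ) ?_ ?_
  · exact Cardinal.mk_le_aleph0
  · intro p i _ t
    exact hpoly0 i t
  · intro j _
    rw [Cardinal.mk_univ]
    exact hcard
  · intro t _
    exact ⟨(), by rw [one_mul]; exact (hid0 t).symm⟩
end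

section
/- Let k be a field, n ≥ 1, m a natural number, S_1, …, S_n countably infinite subsets of k, H : k → k, and F : Fin n → ((Fin n → k) → k) a family of functions such that: (a) for every i and every t : Fin n → k with t j ∈ S_j for all j ≠ i, the one-variable function s ↦ F i (function.update t i s), restricted to S_i, agrees with some polynomial over k of degree at most m; and (b) for every t : Fin n → k with t j ∈ S_j for all j, ∑_{i} F i (t) = ∏_{i} H (t i). Then there exist an index i and a polynomial p over k of degree at most m such that H(x) = p(x) for all x ∈ S_i. -/
open Polynomial

lemma dichot {k : Type*} [Field k] (m : ℕ) (S : Set k) (hS : S.Infinite) (H : k → k) :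
    (∃ p : Polynomial k, p.degree ≤ m ∧ ∀ x ∈ S, H x = p.eval x) ∨
    ∃ a c : Fin (m+2) → k, (∀ r, a r ∈ S) ∧
      (∀ p : Polynomial k, p.degree ≤ m → ∑ r, c r * p.eval (a r) = 0) ∧
      ∑ r, c r * H (a r) ≠ 0 := by
  classical
  set E := Set.Infinite.natEmbedding S hS with hE
  set v : Fin (m+1) → k := fun r => (E r : k) with hv'
  have hv : Function.Injective v := by
    intro a b hab
    have : E a = E b := Subtype.val_injective hab
    have := E.injective this
    exact Fin.ext this
  have hvS : ∀ r, v r ∈ S := fun r => (E r).2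
  set t : Finset k := Finset.image v Finset.univ with ht
  have hinj : Set.InjOn id (t : Set k) := fun a _ b _ h => h
  have hcard : t.card = m + 1 := by
    rw [ht, Finset.card_image_of_injective _ hv, Finset.card_univ, Fintype.card_fin]
  have hlt : ∀ p : Polynomial k, p.degree ≤ (m : ℕ) → p.degree < (t.card : WithBot ℕ) := by
    intro p hp
    rw [hcard]
    refine lt_of_le_of_lt hp ?_
    exact_mod_cast Nat.lt_succ_self m
  have deg_le : ∀ p : Polynomial k, p.degree < (t.card : WithBot ℕ) → p.degree ≤ (m : ℕ) := by
    intro p hp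
    rw [hcard] at hp
    by_cases h0 : p = 0
    · simp [h0]
    · have h1 : p.natDegree < m + 1 := by
        rw [Polynomial.natDegree_lt_iff_degree_lt h0]
        exact_mod_cast hp
      exact Polynomial.degree_le_of_natDegree_le (Nat.lt_succ_iff.mp h1)
  set q := Lagrange.interpolate t id H with hq
  have hqdeg : q.degree ≤ (m : ℕ) := deg_le _ (Lagrange.degree_interpolate_lt H hinj)
  by_cases hH : ∀ x ∈ S, H x = q.eval x
  · exact Or.inl ⟨q, hqdeg, hH⟩
  right
  push_neg at hH
  obtain ⟨y, hyS, hy⟩ := hH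
  set c : Fin (m+2) → k := Fin.snoc (fun r => -(Lagrange.basis t id (v r)).eval y) 1 with hc
  have hsum : ∀ f : k → k,
      ∑ r, c r * f ((Fin.snoc v y : Fin (m+2) → k) r) = f y - (Lagrange.interpolate t id f).eval y := by
    intro f
    rw [Fin.sum_univ_castSucc]
    simp only [hc, Fin.snoc_castSucc, Fin.snoc_last, one_mul]
    rw [Lagrange.interpolate_apply, Polynomial.eval_finset_sum]
    rw [ht, Finset.sum_image (fun a _ b _ h => hv h)]
    have : ∑ r : Fin (m+1), -(Lagrange.basis t id (v r)).eval y * f (v r)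
        = -∑ r : Fin (m+1), Polynomial.eval y (Polynomial.C (f (v r)) * Lagrange.basis t id (v r)) := by
      rw [← Finset.sum_neg_distrib]
      refine Finset.sum_congr rfl fun r _ => ?_
      simp [Polynomial.eval_mul]
      ring
    rw [this]
    ring
  refine ⟨Fin.snoc v y, c, ?_, ?_, ?_⟩
  · intro r
    induction r using Fin.lastCases with
    | last => simpa using hyS
    | cast i => simpa using hvS i
  · intro p hp
    rw [hsum (fun x => p.eval x)]
    have := Lagrange.eq_interpolate hinj (hlt p hp)
    simp only [id_eq] at this
    rw [← this, sub_self]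
  · rw [hsum H]
    exact sub_ne_zero.mpr hy

/-- If each `F i` is, in its `i`-th coordinate and for nodes in the countably infinite
sets `S j`, a polynomial function of degree at most `m`, and `∑ i, F i t = ∏ i, H (t i)`
on `∏ i, S i`, then `H` agrees with a polynomial of degree at most `m` on some `S i`. -/
theorem sum_of_coordinatewise_polynomials_forces_polynomial
    (k : Type*) [Field k] (n : ℕ) (hn : 1 ≤ n) (m : ℕ)
    (S : Fin n → Set k) (hS : ∀ i, (S i).Countable ∧ (S i).Infinite)
    (H : k → k) (F : Fin n → ((Fin n → k) → k))
    (ha : ∀ (i : Fin n) (t : Fin n → k), (∀ j, j ≠ i → t j ∈ S j) →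
      ∃ p : Polynomial k, p.degree ≤ m ∧
        ∀ s ∈ S i, F i (Function.update t i s) = p.eval s)
    (hb : ∀ t : Fin n → k, (∀ j, t j ∈ S j) → ∑ i, F i t = ∏ i, H (t i)) :
    ∃ (i : Fin n) (p : Polynomial k), p.degree ≤ m ∧ ∀ x ∈ S i, H x = p.eval x := by
  classical
  set i₀ : Fin n := ⟨0, hn⟩ with hi₀
  by_cases hex : ∃ (i : Fin n) (p : Polynomial k), p.degree ≤ m ∧ ∀ x ∈ S i, H x = p.eval x
  · exact hex
  have key : ∀ j : Fin n, ∃ a c : Fin (m + 2) → k, (∀ r, a r ∈ S j) ∧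
      (∀ p : Polynomial k, p.degree ≤ m → ∑ r, c r * p.eval (a r) = 0) ∧
      ∑ r, c r * H (a r) ≠ 0 := by
    intro j
    rcases dichot m (S j) (hS j).2 H with h | h
    · exact absurd ⟨j, h⟩ hex
    · exact h
  choose a c haS hkill hne using key
  set Cc : Fin n → Fin (m + 2) → k :=
    fun j => if j = i₀ then (fun r => if r = 0 then 1 else 0) else c j with hCc
  have hCceq : ∀ j, j ≠ i₀ → Cc j = c j := fun j hj => by simp [hCc, hj]
  have hCc1 : ∑ r, Cc i₀ r = 1 := by simp [hCc]
  set w : (Fin n → Fin (m + 2)) → k := fun g => ∏ j, Cc j (g j) with hw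
  set pt : (Fin n → Fin (m + 2)) → k → Fin n → k :=
    fun g s j => if j = i₀ then s else a j (g j) with hpt
  have hptS : ∀ g, ∀ s ∈ S i₀, ∀ j, pt g s j ∈ S j := by
    intro g s hs j
    by_cases hj : j = i₀
    · subst hj; simpa [hpt] using hs
    · simpa [hpt, hj] using haS j (g j)
  set CC : k := ∏ j ∈ Finset.univ.erase i₀, ∑ r, c j r * H (a j r) with hCCdef
  have hCC : CC ≠ 0 :=
    Finset.prod_ne_zero_iff.mpr fun j _ => hne j
  -- RHS computation
  have claimR : ∀ s : k, ∑ g : Fin n → Fin (m + 2), w g * ∏ i, H (pt g s i) = CC * H s := by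
    intro s
    have step1 : ∀ g : Fin n → Fin (m + 2), w g * ∏ i, H (pt g s i)
        = ∏ j, (Cc j (g j) * (if j = i₀ then H s else H (a j (g j)))) := by
      intro g
      rw [Finset.prod_mul_distrib]
      congr 1
      refine Finset.prod_congr rfl fun j _ => ?_
      by_cases hj : j = i₀ <;> simp [hpt, hj]
    rw [Finset.sum_congr rfl fun g _ => step1 g]
    have hps := Finset.prod_univ_sum (fun _ : Fin n => (Finset.univ : Finset (Fin (m + 2))))
      (fun j r => Cc j r * (if j = i₀ then H s else H (a j r)))
    rw [Fintype.piFinset_univ] at hps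
    rw [← hps, ← Finset.mul_prod_erase Finset.univ _ (Finset.mem_univ i₀)]
    have h1 : ∑ r, Cc i₀ r * (if i₀ = i₀ then H s else H (a i₀ r)) = H s := by
      rw [show (∑ r, Cc i₀ r * (if i₀ = i₀ then H s else H (a i₀ r)))
          = ∑ r, Cc i₀ r * H s from Finset.sum_congr rfl fun r _ => by rw [if_pos rfl],
        ← Finset.sum_mul, hCc1, one_mul]
    have h2 : ∏ j ∈ Finset.univ.erase i₀, (∑ r, Cc j r * (if j = i₀ then H s else H (a j r))) = CC := by
      refine Finset.prod_congr rfl fun j hj => ?_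
      have hjne := Finset.ne_of_mem_erase hj
      rw [hCceq j hjne]
      exact Finset.sum_congr rfl fun r _ => by rw [if_neg hjne]
    rw [h1, h2, mul_comm]
  -- vanishing of the non-i₀ terms
  have claim2 : ∀ i, i ≠ i₀ → ∀ s ∈ S i₀, ∑ g : Fin n → Fin (m + 2), w g * F i (pt g s) = 0 := by
    intro i hi s hs
    set e := Equiv.funSplitAt i (Fin (m + 2)) with he
    have hsplit := Fintype.sum_equiv e (fun g => w g * F i (pt g s))
      (fun p => w (e.symm p) * F i (pt (e.symm p) s))
      (fun g => by simp)
    rw [hsplit, Fintype.sum_prod_type_right]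
    refine Finset.sum_eq_zero fun h _ => ?_
    have hgi : ∀ x : Fin (m + 2), (e.symm (x, h)) i = x := by
      intro x; simp [he, Equiv.funSplitAt_symm_apply]
    have hg : ∀ (x : Fin (m + 2)) (j : Fin n) (hj : j ≠ i), (e.symm (x, h)) j = h ⟨j, hj⟩ := by
      intro x j hj; simp [he, Equiv.funSplitAt_symm_apply, hj]
    set τ : Fin n → k := fun j => if j = i₀ then s else if hj : j = i then 0 else a j (h ⟨j, hj⟩)
      with hτ
    have hτS : ∀ j, j ≠ i → τ j ∈ S j := by
      intro j hj
      by_cases hj0 : j = i₀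
      · subst hj0; simpa [hτ] using hs
      · simpa [hτ, hj0, hj] using haS j (h ⟨j, hj⟩)
    obtain ⟨p, hpd, hpe⟩ := ha i τ hτS
    have hptup : ∀ x : Fin (m + 2), pt (e.symm (x, h)) s = Function.update τ i (a i x) := by
      intro x; funext j
      by_cases hj : j = i
      · subst hj
        rw [Function.update_self]
        simp [hpt, hi, hgi x]
      · rw [Function.update_of_ne hj]
        by_cases hj0 : j = i₀
        · subst hj0; simp [hpt, hτ]
        · simp [hpt, hτ, hj0, hj, hg x j hj]
    set K : k := ∏ j ∈ Finset.univ.erase i, Cc j ((e.symm (0, h)) j) with hK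
    have hwx : ∀ x : Fin (m + 2), w (e.symm (x, h)) = c i x * K := by
      intro x
      show ∏ j, Cc j ((e.symm (x, h)) j) = c i x * K
      rw [← Finset.mul_prod_erase Finset.univ _ (Finset.mem_univ i)]
      congr 1
      · rw [hgi x, hCceq i hi]
      · refine Finset.prod_congr rfl fun j hj => ?_
        have hjne := Finset.ne_of_mem_erase hj
        rw [hg x j hjne, hg 0 j hjne]
    calc ∑ x : Fin (m + 2), w (e.symm (x, h)) * F i (pt (e.symm (x, h)) s)
        = ∑ x : Fin (m + 2), K * (c i x * p.eval (a i x)) := by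
          refine Finset.sum_congr rfl fun x _ => ?_
          rw [hwx x, hptup x, hpe (a i x) (haS i x)]
          ring
      _ = K * ∑ x : Fin (m + 2), c i x * p.eval (a i x) := by rw [Finset.mul_sum]
      _ = 0 := by rw [hkill i p hpd, mul_zero]
  -- the i₀ term is polynomial
  have claim3 : ∃ Q : Polynomial k, Q.degree ≤ m ∧
      ∀ s ∈ S i₀, ∑ g : Fin n → Fin (m + 2), w g * F i₀ (pt g s) = Q.eval s := by
    have hch : ∀ g : Fin n → Fin (m + 2), ∃ p : Polynomial k, p.degree ≤ m ∧
        ∀ s ∈ S i₀, F i₀ (pt g s) = p.eval s := by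
      intro g
      have hτS : ∀ j, j ≠ i₀ → pt g 0 j ∈ S j := by
        intro j hj; simpa [hpt, hj] using haS j (g j)
      obtain ⟨p, hpd, hpe⟩ := ha i₀ (pt g 0) hτS
      refine ⟨p, hpd, fun s hs => ?_⟩
      have : pt g s = Function.update (pt g 0) i₀ s := by
        funext j
        by_cases hj : j = i₀
        · subst hj; rw [Function.update_self]; simp [hpt]
        · rw [Function.update_of_ne hj]; simp [hpt, hj]
      rw [this]; exact hpe s hs
    choose P hPd hPe using hch
    refine ⟨∑ g : Fin n → Fin (m + 2), Polynomial.C (w g) * P g, ?_, ?_⟩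
    · refine (Polynomial.degree_sum_le _ _).trans ?_
      refine Finset.sup_le fun g _ => ?_
      refine (Polynomial.degree_mul_le _ _).trans ?_
      calc Polynomial.degree (Polynomial.C (w g)) + (P g).degree
          ≤ 0 + (m : WithBot ℕ) := add_le_add Polynomial.degree_C_le (hPd g)
        _ = (m : WithBot ℕ) := zero_add _
    · intro s hs
      rw [Polynomial.eval_finset_sum]
      exact Finset.sum_congr rfl fun g _ => by
        rw [Polynomial.eval_mul, Polynomial.eval_C, hPe g s hs]
  obtain ⟨Q, hQd, hQe⟩ := claim3
  have final : ∀ s ∈ S i₀, Q.eval s = CC * H s := by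
    intro s hs
    have h1 : ∑ g : Fin n → Fin (m + 2), w g * ∑ i, F i (pt g s)
        = ∑ g : Fin n → Fin (m + 2), w g * ∏ i, H (pt g s i) :=
      Finset.sum_congr rfl fun g _ => by rw [hb (pt g s) (hptS g s hs)]
    rw [claimR s] at h1
    have h2 : ∑ g : Fin n → Fin (m + 2), w g * ∑ i, F i (pt g s)
        = ∑ i, ∑ g : Fin n → Fin (m + 2), w g * F i (pt g s) := by
      simp_rw [Finset.mul_sum]
      exact Finset.sum_comm
    rw [h2] at h1
    have h3 : ∑ i, ∑ g : Fin n → Fin (m + 2), w g * F i (pt g s) = Q.eval s := by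
      rw [Finset.sum_eq_single i₀]
      · exact hQe s hs
      · intro i _ hi; exact claim2 i hi s hs
      · intro hi; exact absurd (Finset.mem_univ i₀) hi
    rw [h3] at h1
    exact h1
  refine absurd ⟨i₀, Polynomial.C CC⁻¹ * Q, ?_, ?_⟩ hex
  · refine (Polynomial.degree_mul_le _ _).trans ?_
    calc Polynomial.degree (Polynomial.C CC⁻¹) + Q.degree
        ≤ 0 + (m : WithBot ℕ) := add_le_add Polynomial.degree_C_le hQd
      _ = (m : WithBot ℕ) := zero_add _
  · intro x hx
    rw [Polynomial.eval_mul, Polynomial.eval_C, final x hx, ← mul_assoc,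
      inv_mul_cancel₀ hCC, one_mul]
end

section
/- Let A be a commutative ring, and let 0 → P₁ →^{d₁} P₂ → M → 0 and 0 → Q₁ →^{d₂} Q₂ → M' → 0 be short exact sequences of A-modules in which P₁, P₂, Q₁, Q₂ are projective and M, M' are flat. Then the sequence 0 → P₁ ⊗_A Q₁ → (P₂ ⊗_A Q₁) ⊕ (P₁ ⊗_A Q₂) → P₂ ⊗_A Q₂ → M ⊗_A M' → 0 is exact, where the first map sends p ⊗ q to (d₁ p ⊗ q, −(p ⊗ d₂ q)), the second map sends (x, y) to (id_{P₂} ⊗ d₂)(x) + (d₁ ⊗ id_{Q₂})(y), and the last map is the tensor product of the two projections P₂ → M and Q₂ → M'. -/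
open TensorProduct

/-- **Tensor product of two-term projective resolutions.** Given short exact sequences
`0 → P₁ → P₂ → M → 0` and `0 → Q₁ → Q₂ → M' → 0` with `P₁, P₂, Q₁, Q₂` projective and
`M, M'` flat, the total complex
`0 → P₁ ⊗ Q₁ → (P₂ ⊗ Q₁) × (P₁ ⊗ Q₂) → P₂ ⊗ Q₂ → M ⊗ M' → 0` is exact. -/
theorem tensor_of_resolutions_exact
    (A : Type*) [CommRing A]
    (P₁ P₂ Q₁ Q₂ M M' : Type*)
    [AddCommGroup P₁] [Module A P₁] [AddCommGroup P₂] [Module A P₂]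
    [AddCommGroup Q₁] [Module A Q₁] [AddCommGroup Q₂] [Module A Q₂]
    [AddCommGroup M] [Module A M] [AddCommGroup M'] [Module A M']
    [Module.Projective A P₁] [Module.Projective A P₂]
    [Module.Projective A Q₁] [Module.Projective A Q₂]
    [Module.Flat A M] [Module.Flat A M']
    (d₁ : P₁ →ₗ[A] P₂) (π : P₂ →ₗ[A] M)
    (d₂ : Q₁ →ₗ[A] Q₂) (π' : Q₂ →ₗ[A] M')
    (hd₁ : Function.Injective d₁) (hπ : Function.Surjective π)
    (h₁ : LinearMap.range d₁ = LinearMap.ker π)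
    (hd₂ : Function.Injective d₂) (hπ' : Function.Surjective π')
    (h₂ : LinearMap.range d₂ = LinearMap.ker π') :
    Function.Injective
        (LinearMap.prod (TensorProduct.map d₁ (LinearMap.id : Q₁ →ₗ[A] Q₁))
          (-(TensorProduct.map (LinearMap.id : P₁ →ₗ[A] P₁) d₂))) ∧
      Function.Exact
        (LinearMap.prod (TensorProduct.map d₁ (LinearMap.id : Q₁ →ₗ[A] Q₁))
          (-(TensorProduct.map (LinearMap.id : P₁ →ₗ[A] P₁) d₂)))
        (LinearMap.coprod (TensorProduct.map (LinearMap.id : P₂ →ₗ[A] P₂) d₂)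
          (TensorProduct.map d₁ (LinearMap.id : Q₂ →ₗ[A] Q₂))) ∧
      Function.Exact
        (LinearMap.coprod (TensorProduct.map (LinearMap.id : P₂ →ₗ[A] P₂) d₂)
          (TensorProduct.map d₁ (LinearMap.id : Q₂ →ₗ[A] Q₂)))
        (TensorProduct.map π π') ∧
      Function.Surjective (TensorProduct.map π π') := by
  have e₁ : Function.Exact d₁ π := LinearMap.exact_iff.mpr h₁.symm
  have e₂ : Function.Exact d₂ π' := LinearMap.exact_iff.mpr h₂.symm
  have inj₁ : Function.Injective (LinearMap.rTensor Q₁ d₁) :=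
    Module.Flat.rTensor_preserves_injective_linearMap d₁ hd₁
  have inj₂ : Function.Injective (LinearMap.rTensor Q₂ d₁) :=
    Module.Flat.rTensor_preserves_injective_linearMap d₁ hd₁
  have injM : Function.Injective (LinearMap.lTensor M d₂) :=
    Module.Flat.lTensor_preserves_injective_linearMap d₂ hd₂
  refine ⟨?_, ?_, ?_, TensorProduct.map_surjective hπ hπ'⟩
  · intro x y h
    exact inj₁ (congrArg Prod.fst h)
  · rintro ⟨x, y⟩
    constructor
    · intro h
      -- h : map id d₂ x + map d₁ id y = 0
      have h' : LinearMap.lTensor P₂ d₂ x + LinearMap.rTensor Q₂ d₁ y = 0 := h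
      -- apply rTensor Q₂ π
      have hx0 : LinearMap.lTensor M d₂ (LinearMap.rTensor Q₁ π x) = 0 := by
        have := congrArg (LinearMap.rTensor Q₂ π) h'
        rw [map_add, map_zero] at this
        have c1 : LinearMap.rTensor Q₂ π (LinearMap.lTensor P₂ d₂ x)
            = LinearMap.lTensor M d₂ (LinearMap.rTensor Q₁ π x) := by
          rw [← LinearMap.comp_apply, LinearMap.rTensor_comp_lTensor,
            ← LinearMap.lTensor_comp_rTensor, LinearMap.comp_apply]
        have c2 : LinearMap.rTensor Q₂ π (LinearMap.rTensor Q₂ d₁ y) = 0 := by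
          rw [← LinearMap.comp_apply, ← LinearMap.rTensor_comp]
          have : π ∘ₗ d₁ = 0 := by
            ext p
            exact e₁.apply_apply_eq_zero p
          rw [this]
          simp
        rw [c1, c2, add_zero] at this
        exact this
      have hxker : LinearMap.rTensor Q₁ π x = 0 := by
        apply injM
        simpa using hx0
      obtain ⟨z, hz⟩ :=
        ((rTensor_exact Q₁ e₁ hπ) x).mp hxker
      refine ⟨z, ?_⟩
      have hy : LinearMap.rTensor Q₂ d₁ y
          = LinearMap.rTensor Q₂ d₁ (-(LinearMap.lTensor P₁ d₂ z)) := by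
        rw [map_neg]
        have : LinearMap.rTensor Q₂ d₁ (LinearMap.lTensor P₁ d₂ z)
            = LinearMap.lTensor P₂ d₂ (LinearMap.rTensor Q₁ d₁ z) := by
          rw [← LinearMap.comp_apply, LinearMap.rTensor_comp_lTensor,
            ← LinearMap.lTensor_comp_rTensor, LinearMap.comp_apply]
        rw [this, hz]
        rw [eq_neg_iff_add_eq_zero, add_comm]
        exact h'
      have hy' : y = -(LinearMap.lTensor P₁ d₂ z) := inj₂ hy
      simp only [LinearMap.prod_apply, Pi.prod, LinearMap.neg_apply]
      exact Prod.ext hz hy'.symm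
    · rintro ⟨z, hz⟩
      rw [← hz]
      simp only [LinearMap.prod_apply, Function.prod, LinearMap.neg_apply,
        LinearMap.coprod_apply, map_neg]
      rw [← LinearMap.comp_apply, ← LinearMap.comp_apply,
        ← TensorProduct.map_comp, ← TensorProduct.map_comp]
      simp
  · rw [LinearMap.exact_iff, LinearMap.range_coprod,
      TensorProduct.map_ker e₁ hπ e₂ hπ']
    rfl
end
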